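/- arXiv:2504.01364 — 14 statements merged into one kernel-verified Lean document; each statement's English description precedes it below -/
import Mathlib

section
/- For integers n ≥ 3, ℓ with -1 ≤ ℓ ≤ n-3, and i with 1 ≤ i ≤ (n-1-ℓ)/2, the graph G = K_{i+ℓ} + (I_i ∪ K_{n-2i-ℓ}) (the join of a clique on i+ℓ vertices with the disjoint union of an independent set of size i and a clique on n-2i-ℓ vertices) is the unique simple graph on n vertices whose nondecreasing degree list is: i+ℓ repeated i times, then n-i-1 repeated n-2i-ℓ times, then n-1 repeated i+ℓ times. -/
/-!
The vertices of degree `n - 1` form a set `U` of size `a = i + ℓ` and are joined to everything.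
A vertex of degree `a` is adjacent to all of `U`, so its neighbourhood is exactly `U`; pick a
set `S` of `i` of them (there are `i + 1` when `a = n - i - 1`). Every remaining vertex `r` is
then non-adjacent to `S`, and as its degree is `n - 1 - i` it is adjacent to every other vertex
outside `S`. Hence the graph is `K_U + (I_S ∪ K_R)`, and two such graphs whose parts have the
same sizes are isomorphic part by part.
-/

/-- The graph `K_a + (I_b ∪ K_{n-a-b})` on `n` vertices: the first `a` vertices form a
clique joined to everything, the next `b` vertices form an independent set, and the
remaining `n - a - b` vertices form a clique. -/
def stdG (n a b : ℕ) : SimpleGraph (Fin n) where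
  Adj v w := v ≠ w ∧ ((v : ℕ) < a ∨ (w : ℕ) < a ∨ (a + b ≤ (v : ℕ) ∧ a + b ≤ (w : ℕ)))
  symm := by
    constructor
    intro v w h
    exact ⟨h.1.symm, by tauto⟩
  loopless := by
    constructor
    intro v h
    exact h.1 rfl

open Finset

theorem Finset.card_filter_eq_count_map {α β : Type*} [DecidableEq β] (s : Finset α) (f : α → β)
    (b : β) : #{x ∈ s | f x = b} = (s.val.map f).count b := by
  simp_rw [Multiset.count_map, eq_comm]
  rfl

namespace SimpleGraph

theorem nonempty_iso_of_adj_iff_of_card_fiber {V W C : Type*} [Finite V] [Finite W]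
    {G : SimpleGraph V} {H : SimpleGraph W} (f : V → C) (g : W → C) (P : C → C → Prop)
    (hG : ∀ v v', G.Adj v v' ↔ v ≠ v' ∧ P (f v) (f v'))
    (hH : ∀ w w', H.Adj w w' ↔ w ≠ w' ∧ P (g w) (g w'))
    (hfg : ∀ c, Nat.card {v // f v = c} = Nat.card {w // g w = c}) :
    Nonempty (G ≃g H) := by
  let e : V ≃ W := Equiv.ofFiberEquiv fun c => (Finite.card_eq.mp (hfg c)).some
  have he : ∀ v, g (e v) = f v := Equiv.ofFiberEquiv_map _
  exact ⟨⟨e, fun {v v'} => by rw [hG, hH, e.injective.ne_iff, he, he]⟩⟩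

variable {V W : Type*} [DecidableEq V] [DecidableEq W]

/-- `K_U + (I_S ∪ K_R)` with `R = (U ∪ S)ᶜ`. -/
def joinGraph (U S : Finset V) : SimpleGraph V where
  Adj v w := v ≠ w ∧ (v ∈ U ∨ w ∈ U ∨ (v ∉ U ∪ S ∧ w ∉ U ∪ S))
  symm := ⟨fun _ _ h => ⟨h.1.symm, by tauto⟩⟩
  loopless := ⟨fun _ h => h.1 rfl⟩

@[simp]
theorem joinGraph_adj {U S : Finset V} {v w : V} :
    (joinGraph U S).Adj v w ↔ v ≠ w ∧ (v ∈ U ∨ w ∈ U ∨ (v ∉ U ∪ S ∧ w ∉ U ∪ S)) :=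
  Iff.rfl

def joinPart (U S : Finset V) (v : V) : Fin 3 :=
  if v ∈ U then 0 else if v ∈ S then 1 else 2

theorem joinGraph_adj_iff_joinPart {U S : Finset V} (hUS : Disjoint U S) (v w : V) :
    (joinGraph U S).Adj v w ↔
      v ≠ w ∧ (joinPart U S v = 0 ∨ joinPart U S w = 0 ∨
        (joinPart U S v = 2 ∧ joinPart U S w = 2)) := by
  have hUS' := Finset.disjoint_left.mp hUS
  simp only [joinGraph_adj, joinPart]
  split_ifs <;> simp_all

variable [Fintype V] [Fintype W]

theorem card_joinPart_fiber {U S : Finset V} (hUS : Disjoint U S) (c : Fin 3) :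
    Nat.card {v // joinPart U S v = c} = ![#U, #S, Fintype.card V - #U - #S] c := by
  rw [Nat.card_eq_fintype_card, Fintype.card_subtype]
  have hfiber : ∀ (c : Fin 3) (T : Finset V),
      (∀ v, joinPart U S v = c ↔ v ∈ T) → #{v | joinPart U S v = c} = #T := fun c T hT => by
    congr 1; ext v; simp [hT]
  have hUS' := Finset.disjoint_left.mp hUS
  fin_cases c
  · exact hfiber 0 U fun v => by unfold joinPart; split_ifs <;> simp_all
  · exact hfiber 1 S fun v => by unfold joinPart; split_ifs <;> simp_all
  · refine (hfiber 2 (U ∪ S)ᶜ fun v => by unfold joinPart; split_ifs <;> simp_all).trans ?_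
    rw [card_compl, card_union_of_disjoint hUS, Nat.sub_sub]
    rfl

theorem nonempty_iso_joinGraph {U S : Finset V} {U' S' : Finset W}
    (hUS : Disjoint U S) (hUS' : Disjoint U' S')
    (hU : #U = #U') (hS : #S = #S') (hVW : Fintype.card V = Fintype.card W) :
    Nonempty (joinGraph U S ≃g joinGraph U' S') :=
  nonempty_iso_of_adj_iff_of_card_fiber (joinPart U S) (joinPart U' S')
    (fun c c' => c = 0 ∨ c' = 0 ∨ (c = 2 ∧ c' = 2))
    (joinGraph_adj_iff_joinPart hUS) (joinGraph_adj_iff_joinPart hUS') fun c => by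
      rw [card_joinPart_fiber hUS, card_joinPart_fiber hUS', hU, hS, hVW]

variable (G : SimpleGraph V) [DecidableRel G.Adj]

theorem eq_joinGraph_of_degree {U S : Finset V} (hUS : Disjoint U S)
    (hU : ∀ u ∈ U, G.degree u = Fintype.card V - 1) (hS : ∀ s ∈ S, G.degree s = #U)
    (hR : ∀ r ∉ U ∪ S, G.degree r = Fintype.card V - 1 - #S) : G = joinGraph U S := by
  have hUS' := Finset.disjoint_left.mp hUS
  have universal : ∀ u ∈ U, G.IsUniversal u := fun u hu =>
    (G.degree_eq_card_sub_one u).mp (hU u hu)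
  have nbr_of_mem_S : ∀ s ∈ S, G.neighborFinset s = U := fun s hs =>
    (eq_of_subset_of_card_le
      (fun u hu => (G.mem_neighborFinset s u).mpr
        (universal u hu fun h => hUS' hu (h ▸ hs)).symm)
      (by rw [card_neighborFinset_eq_degree, hS s hs])).symm
  have nbr_of_not_mem : ∀ r ∉ U ∪ S, G.neighborFinset r = (insert r S)ᶜ := by
    intro r hr
    refine eq_of_subset_of_card_le (fun x hx => ?_) ?_
    · have hrx : G.Adj r x := (G.mem_neighborFinset r x).mp hx
      rw [mem_compl, mem_insert, not_or]
      refine ⟨hrx.ne', fun hxS => hr (mem_union_left _ ?_)⟩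
      rw [← nbr_of_mem_S x hxS]
      exact (G.mem_neighborFinset x r).mpr hrx.symm
    · rw [card_compl, card_insert_of_notMem fun h => hr (mem_union_right _ h),
        card_neighborFinset_eq_degree, hR r hr]
      omega
  ext v w
  rw [← G.mem_neighborFinset, joinGraph_adj]
  by_cases hvU : v ∈ U
  · rw [(G.neighborFinset_eq_erase_univ v).mpr (universal v hvU)]
    simp [hvU, eq_comm]
  have hwUS := hUS' (a := w)
  by_cases hvS : v ∈ S
  · rw [nbr_of_mem_S v hvS]
    simp only [mem_union, hvU, hvS]
    grind
  · rw [nbr_of_not_mem v (by simp [hvU, hvS])]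
    simp only [mem_compl, mem_insert, mem_union, hvU, hvS]
    grind

theorem exists_eq_joinGraph_of_degree_multiset {n a i c : ℕ} (hV : Fintype.card V = n)
    (hn : a + i + c = n) (hi : 1 ≤ i) (hc : 1 ≤ c)
    (hdeg : (univ.val.map fun v => G.degree v) =
      Multiset.replicate i a + Multiset.replicate c (n - i - 1) + Multiset.replicate a (n - 1)) :
    ∃ U S : Finset V, Disjoint U S ∧ #U = a ∧ #S = i ∧ G = joinGraph U S := by
  have hcount : ∀ d, #{v | G.degree v = d} =
      (if a = d then i else 0) + (if n - i - 1 = d then c else 0) +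
        (if n - 1 = d then a else 0) := by
    intro d
    rw [card_filter_eq_count_map, hdeg]
    simp [Multiset.count_replicate]
  have hmem : ∀ v, G.degree v = a ∨ G.degree v = n - i - 1 ∨ G.degree v = n - 1 := fun v => by
    have := Multiset.mem_map_of_mem (fun v => G.degree v) (mem_val.mpr (mem_univ v))
    rw [hdeg] at this
    simp only [Multiset.mem_add, Multiset.mem_replicate] at this
    tauto
  set U : Finset V := {v | G.degree v = n - 1}
  set T : Finset V := {v | G.degree v = a}
  have hU : #U = a := by rw [hcount]; split_ifs <;> omega
  obtain ⟨S, hST, hS⟩ :=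
    exists_subset_card_eq (s := T) (n := i) (by rw [hcount]; split_ifs <;> omega)
  have hUS : Disjoint U S := (disjoint_filter.mpr
    fun v _ (hv : G.degree v = n - 1) (hv' : G.degree v = a) => by omega).mono_right hST
  have hR : ∀ r ∉ U ∪ S, G.degree r = Fintype.card V - 1 - #S := by
    intro r hr
    rw [hV, hS]
    rcases hmem r with h | h | h
    · by_cases hc' : c = 1
      · omega
      have hTS : T = S :=
        (eq_of_subset_of_card_le hST (by rw [hS, hcount]; split_ifs <;> omega)).symm
      exact absurd (mem_union_right U (hTS ▸ mem_filter.mpr ⟨mem_univ r, h⟩)) hr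
    · omega
    · exact absurd (mem_union_left S (mem_filter.mpr ⟨mem_univ r, h⟩)) hr
  refine ⟨U, S, hUS, hU, hS, G.eq_joinGraph_of_degree hUS (fun u hu => ?_) (fun s hs => ?_) hR⟩
  · rw [hV]; exact (mem_filter.mp hu).2
  · rw [hU]; exact (mem_filter.mp (hST hs)).2

theorem nonempty_iso_joinGraph_stdG {n : ℕ} {U S : Finset (Fin n)} (hUS : Disjoint U S) :
    Nonempty (joinGraph U S ≃g stdG n #U #S) := by
  have hn : #U + #S ≤ n := by
    simpa [card_union_of_disjoint hUS] using card_le_univ (U ∪ S)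
  let U₀ : Finset (Fin n) := {v | (v : ℕ) < #U}
  let A₀ : Finset (Fin n) := {v | (v : ℕ) < #U + #S}
  have hU₀A₀ : U₀ ⊆ A₀ := fun v hv => by
    simp only [U₀, A₀, mem_filter, mem_univ, true_and] at hv ⊢; omega
  have hstdG : stdG n #U #S = joinGraph U₀ (A₀ \ U₀) := by
    ext v w
    simp only [stdG, joinGraph_adj, union_sdiff_of_subset hU₀A₀, U₀, A₀, mem_filter,
      mem_univ, true_and, not_lt]
  rw [hstdG]
  refine nonempty_iso_joinGraph hUS disjoint_sdiff ?_ ?_ rfl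
  · simp [U₀, Fin.card_filter_val_lt]; omega
  · rw [card_sdiff_of_subset hU₀A₀]
    simp [U₀, A₀, Fin.card_filter_val_lt]; omega

end SimpleGraph

theorem stmt0_general (n i : ℕ) (ℓ : ℤ)
    (hi1 : 1 ≤ i) (hi2 : (i : ℤ) ≤ ((n : ℤ) - 1 - ℓ) / 2)
    (a c : ℕ) (ha : (a : ℤ) = (i : ℤ) + ℓ) (hc : (c : ℤ) = (n : ℤ) - 2 * (i : ℤ) - ℓ)
    (G : SimpleGraph (Fin n)) [DecidableRel G.Adj]
    (hdeg : (Finset.univ.val.map fun v => G.degree v) =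
      Multiset.replicate i a + Multiset.replicate c (n - i - 1) +
        Multiset.replicate a (n - 1)) :
    Nonempty (G ≃g stdG n a i) := by
  obtain ⟨U, S, hUS, rfl, rfl, hG⟩ := G.exists_eq_joinGraph_of_degree_multiset
    (Fintype.card_fin n) (by omega) hi1 (by omega) hdeg
  rw [hG]
  exact SimpleGraph.nonempty_iso_joinGraph_stdG hUS

/-- For `n ≥ 3`, `-1 ≤ ℓ ≤ n-3` and `1 ≤ i ≤ (n-1-ℓ)/2`, the graph
`K_{i+ℓ} + (I_i ∪ K_{n-2i-ℓ})` (here `stdG n a i` with `a = i+ℓ` and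
`c = n-2i-ℓ` remaining clique vertices) is the unique simple graph on `n` vertices
whose nondecreasing degree list is `i+ℓ` (×`i`), `n-i-1` (×`n-2i-ℓ`), `n-1` (×`i+ℓ`):
any graph with that degree multiset is isomorphic to it. -/
theorem stmt0 (n i : ℕ) (ℓ : ℤ) (hn : 3 ≤ n) (hl1 : -1 ≤ ℓ) (hl2 : ℓ ≤ (n : ℤ) - 3)
    (hi1 : 1 ≤ i) (hi2 : (i : ℤ) ≤ ((n : ℤ) - 1 - ℓ) / 2)
    (a c : ℕ) (ha : (a : ℤ) = (i : ℤ) + ℓ) (hc : (c : ℤ) = (n : ℤ) - 2 * (i : ℤ) - ℓ)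
    (G : SimpleGraph (Fin n)) [DecidableRel G.Adj]
    (hdeg : (Finset.univ.val.map fun v => G.degree v) =
      Multiset.replicate i a + Multiset.replicate c (n - i - 1) +
        Multiset.replicate a (n - 1)) :
    Nonempty (G ≃g stdG n a i) :=
  stmt0_general n i ℓ hi1 hi2 a c ha hc G hdeg
end

section
/- Let n, i be positive integers with 1 ≤ i ≤ (n-1)/2. Then the graph K_i + (I_i ∪ K_{n-2i}) on n vertices is not Hamiltonian. -/
/-!
Along a Hamiltonian cycle every vertex of the independent set `I_i` has both cycle-neighbours
in `K_i`, which uses up all `2i` cycle-edges at `K_i`. So `K_i ∪ I_i` is closed under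
adjacency in the cycle, and since the cycle is connected and spanning, it would contain the
vertices of `K_{n-2i}` too.
-/

open Finset

namespace SimpleGraph

variable {V : Type*}

theorem Subgraph.Preconnected.mem_of_forall_adj_mem {G : SimpleGraph V} {H : G.Subgraph}
    (hH : H.Preconnected) {C : Set V} (hC : ∀ ⦃v w⦄, H.Adj v w → v ∈ C → w ∈ C) {u v : V}
    (hu : u ∈ H.verts) (hv : v ∈ H.verts) (huC : u ∈ C) : v ∈ C := by
  obtain ⟨q⟩ := hH ⟨u, hu⟩ ⟨v, hv⟩
  by_contra hvC
  obtain ⟨d, -, hd₁, hd₂⟩ := q.exists_boundary_dart {x | x.1 ∈ C} huC hvC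
  exact hd₂ (hC d.adj hd₁)

/-- Double counting the edges between `S` and `T`. -/
theorem IsRegularOfDegree.neighborFinset_subset_of_card_le [Fintype V] {H : SimpleGraph V}
    [DecidableRel H.Adj] {d : ℕ} (hH : H.IsRegularOfDegree d) {S T : Finset V}
    (hTS : ∀ t ∈ T, H.neighborFinset t ⊆ S) (hST : #S ≤ #T) {s : V} (hs : s ∈ S) :
    H.neighborFinset s ⊆ T := by
  have hsub : ∀ s, T.bipartiteAbove H.Adj s ⊆ H.neighborFinset s := fun s w hw =>
    (H.mem_neighborFinset s w).2 (mem_filter.1 hw).2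
  have hle : ∀ s ∈ S, #(T.bipartiteAbove H.Adj s) ≤ d := fun s _ =>
    hH s ▸ card_le_card (hsub s)
  have hsum : ∑ s ∈ S, #(T.bipartiteAbove H.Adj s) = d * #T := by
    rw [sum_card_bipartiteAbove_eq_sum_card_bipartiteBelow, mul_comm, ← smul_eq_mul,
      ← sum_const]
    refine sum_congr rfl fun t ht => ?_
    rw [← hH t, ← card_neighborFinset_eq_degree]
    congr 1
    ext w
    simpa [bipartiteBelow, H.adj_comm w t] using fun hw => hTS t ht hw
  have hfull : #(T.bipartiteAbove H.Adj s) = d := by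
    refine (sum_eq_sum_iff_of_le hle).1 (le_antisymm (sum_le_sum hle) ?_) s hs
    rw [hsum, sum_const, smul_eq_mul, mul_comm]
    exact Nat.mul_le_mul_left d hST
  rw [← eq_of_subset_of_card_le (hsub s) (by rw [card_neighborFinset_eq_degree, hH s, hfull])]
  exact filter_subset _ _

theorem Walk.IsHamiltonianCycle.isRegularOfDegree_two_spanningCoe_toSubgraph [Fintype V] [DecidableEq V]
    {G : SimpleGraph V} {a : V} {p : G.Walk a a} (hp : p.IsHamiltonianCycle)
    [DecidableRel p.toSubgraph.spanningCoe.Adj] :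
    p.toSubgraph.spanningCoe.IsRegularOfDegree 2 := by
  intro v
  rw [← card_neighborFinset_eq_degree, neighborFinset, ← Set.ncard_eq_toFinset_card']
  exact hp.isCycle.ncard_neighborSet_toSubgraph_eq_two (hp.mem_support v)

theorem Walk.IsHamiltonianCycle.union_eq_univ_of_neighborSet_subset [Fintype V] [DecidableEq V]
    {G : SimpleGraph V} {a : V} {p : G.Walk a a} (hp : p.IsHamiltonianCycle) {S T : Finset V}
    (hT : T.Nonempty) (hTS : ∀ t ∈ T, G.neighborSet t ⊆ S) (hST : #S ≤ #T) :
    S ∪ T = univ := by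
  classical
  have hST' : ∀ s ∈ S, ∀ w, p.toSubgraph.Adj s w → w ∈ T := fun s hs w hw =>
    hp.isRegularOfDegree_two_spanningCoe_toSubgraph.neighborFinset_subset_of_card_le
      (fun t ht _ hw => hTS t ht (p.toSubgraph.adj_sub ((mem_neighborFinset _ _ _).1 hw))) hST hs
      ((mem_neighborFinset _ _ _).2 hw)
  have hclosed : ∀ ⦃v w⦄, p.toSubgraph.Adj v w → v ∈ (S ∪ T : Set V) → w ∈ (S ∪ T : Set V) := by
    rintro v w hvw (hv | hv)
    · exact .inr (hST' v hv w hvw)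
    · exact .inl (hTS v hv (p.toSubgraph.adj_sub hvw))
  have hverts : ∀ v, v ∈ p.toSubgraph.verts := fun v =>
    p.mem_verts_toSubgraph.2 (hp.mem_support v)
  obtain ⟨t, ht⟩ := hT
  refine eq_univ_of_forall fun v => ?_
  simpa using p.toSubgraph_connected.preconnected.mem_of_forall_adj_mem hclosed (hverts t)
    (hverts v) (.inr ht)

end SimpleGraph

theorem stdG_neighborSet_subset {n a b : ℕ} {v : Fin n} (hv : a ≤ v ∧ v < a + b) :
    (stdG n a b).neighborSet v ⊆ {w | w < a} := by
  rintro w ⟨-, hvw⟩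
  exact show (w : ℕ) < a by omega

/-- The graph `K_i + (I_i ∪ K_{n-2i})` on `n` vertices with `1 ≤ i ≤ (n-1)/2`
is not Hamiltonian. -/
theorem stmt1 (n i : ℕ) (hi : 1 ≤ i) (hin : i ≤ (n - 1) / 2) :
    ¬ (stdG n i i).IsHamiltonian := by
  intro hG
  have hn : 2 * i < n := by omega
  obtain ⟨a, p, hp⟩ := hG (by rw [Fintype.card_fin]; omega)
  set S : Finset (Fin n) := Iio ⟨i, by omega⟩
  set T : Finset (Fin n) := Ico ⟨i, by omega⟩ ⟨2 * i, hn⟩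
  have hT : T.Nonempty := ⟨⟨i, by omega⟩, by simp [T, Fin.lt_def]; omega⟩
  have hTS : ∀ t ∈ T, (stdG n i i).neighborSet t ⊆ S := by
    intro t ht w hw
    simp only [T, mem_Ico, Fin.le_def, Fin.lt_def] at ht
    simpa [S, Fin.lt_def] using stdG_neighborSet_subset (by omega) hw
  have hcard : #S ≤ #T := by simp [S, T]; omega
  have hout := hp.union_eq_univ_of_neighborSet_subset hT hTS hcard ▸ mem_univ (⟨2 * i, hn⟩ : Fin n)
  simp [S, T, Fin.lt_def] at hout
  omega
end

section
/- Let n, i be integers with 1 ≤ i ≤ n/2. Then the graph K_{i-1} + (I_i ∪ K_{n-2i+1}) on n vertices is not traceable (contains no Hamilton path). -/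
/-! In `stdG n a b` every neighbour of a vertex of the independent set `B` lies in the clique
`A` of size `a`. Along a walk, every visit to `B` except possibly the last is followed by a
visit to `A`, so a walk visits `B` at most once more than `A`; and this surplus is lost as soon
as the walk also meets the clique outside `A ∪ B`, which can only be entered from `A` or from
itself. A Hamilton path visits all `b` vertices of `B`, all `a` of `A` and the nonempty
remaining clique, hence `b ≤ a`, which fails for `a = i - 1`, `b = i`. -/

open Finset

namespace SimpleGraph.Walk

variable {V : Type*} {G : SimpleGraph V}

-- The term for `A u` is what makes the induction go through: a walk starting in `A` has no
-- surplus of `B`-vertices at all.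
theorem countP_support_le_of_adj_imp {A B : V → Prop} [DecidablePred A] [DecidablePred B]
    (hB : ∀ x y, G.Adj x y → B x → A y) {u v : V} (p : G.Walk u v) :
    p.support.countP (B ·) + (if A u then 1 else 0) ≤ p.support.countP (A ·) + 1 ∧
      ∀ w ∈ p.support, ¬ A w → ¬ B w →
        p.support.countP (B ·) + (if A u then 1 else 0) ≤ p.support.countP (A ·) := by
  induction p with
  | nil => grind [support_nil]
  | @cons x y _ hxy p ih =>
    obtain ⟨ih₁, ih₂⟩ := ih
    have hAy : B x → A y := hB x y hxy
    have hAx : B y → A x := hB y x hxy.symm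
    have ih₂y := ih₂ y p.start_mem_support
    simp only [support_cons, List.countP_cons, List.mem_cons]
    refine ⟨by grind, fun w hw hwA hwB => ?_⟩
    rcases hw with rfl | hw <;> grind

theorem IsHamiltonian.countP_support [Fintype V] [DecidableEq V] {u v : V} {p : G.Walk u v}
    (hp : p.IsHamiltonian) (P : V → Prop) [DecidablePred P] :
    p.support.countP (P ·) = #{w | P w} := by
  rw [List.countP_eq_length_filter, ← List.toFinset_card_of_nodup
    (hp.isPath.support_nodup.filter _), List.toFinset_filter, hp.toFinset_support]
  simp only [decide_eq_true_eq]

end SimpleGraph.Walk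

theorem Fin.card_filter_le_val_lt {n a b : ℕ} (h : a + b ≤ n) :
    #{v : Fin n | a ≤ (v : ℕ) ∧ (v : ℕ) < a + b} = b := by
  have hsdiff : univ.filter (fun v : Fin n => a ≤ (v : ℕ) ∧ (v : ℕ) < a + b) =
      univ.filter (fun v : Fin n => (v : ℕ) < a + b) \
        univ.filter (fun v : Fin n => (v : ℕ) < a) := by
    ext v; simp only [mem_sdiff, mem_filter, mem_univ, true_and]; omega
  have hsub : univ.filter (fun v : Fin n => (v : ℕ) < a) ⊆
      univ.filter (fun v : Fin n => (v : ℕ) < a + b) :=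
    monotone_filter_right _ fun v _ (hv : (v : ℕ) < a) => by omega
  rw [hsdiff, card_sdiff_of_subset hsub, Fin.card_filter_val_lt, Fin.card_filter_val_lt]
  omega

theorem stdG_adj_lt_of_le_of_lt {n a b : ℕ} {x y : Fin n} (h : (stdG n a b).Adj x y)
    (hax : a ≤ (x : ℕ)) (hxb : (x : ℕ) < a + b) : (y : ℕ) < a := by
  grind [stdG]

theorem le_of_isHamiltonian_stdG {n a b : ℕ} (h : a + b < n) {u v : Fin n}
    {p : (stdG n a b).Walk u v} (hp : p.IsHamiltonian) : b ≤ a := by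
  have hB : ∀ x y : Fin n, (stdG n a b).Adj x y → a ≤ (x : ℕ) ∧ (x : ℕ) < a + b → (y : ℕ) < a :=
    fun x y hxy hx => stdG_adj_lt_of_le_of_lt hxy hx.1 hx.2
  have key := (SimpleGraph.Walk.countP_support_le_of_adj_imp hB p).2 ⟨a + b, h⟩
    (hp.mem_support _) (by simp) (by simp)
  rw [hp.countP_support, hp.countP_support, Fin.card_filter_le_val_lt h.le,
    Fin.card_filter_val_lt] at key
  omega

/-- The graph `K_{i-1} + (I_i ∪ K_{n-2i+1})` on `n` vertices with `1 ≤ i ≤ n/2`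
is not traceable: it contains no Hamilton path. -/
theorem stmt2 (n i : ℕ) (hi : 1 ≤ i) (hin : i ≤ n / 2) :
    ¬ ∃ (u v : Fin n) (p : (stdG n (i - 1) i).Walk u v), p.IsHamiltonian := by
  rintro ⟨u, v, p, hp⟩
  have hle : i ≤ i - 1 := le_of_isHamiltonian_stdG (by omega) hp
  omega
end

section
/- Let n, i be integers with 1 ≤ i ≤ (n-2)/2. Then the graph K_{i+1} + (I_i ∪ K_{n-2i-1}) on n vertices is not Hamiltonian-connected: there exist two distinct vertices with no Hamilton path between them. -/
open Finset

namespace SimpleGraph.Walk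

variable {V : Type*} {G : SimpleGraph V} {u v : V} {p : G.Walk u v}

lemma IsPath.injOn_dart_fst (hp : p.IsPath) :
    Set.InjOn (fun d : G.Dart ↦ d.fst) {d | d ∈ p.darts} := by
  have hnodup : (p.darts.map (·.fst)).Nodup := by
    rw [map_fst_darts]
    exact hp.support_nodup.sublist (List.dropLast_sublist _)
  exact fun _ hd _ hd' ↦ List.inj_on_of_nodup_map hnodup hd hd'

lemma IsPath.dart_fst_ne_end (hp : p.IsPath) {d : G.Dart} (hd : d ∈ p.darts) : d.fst ≠ v := by
  have hnodup := hp.support_nodup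
  rw [← map_fst_darts_append, List.nodup_append] at hnodup
  rintro rfl
  exact hnodup.2.2 _ (List.mem_map_of_mem hd) _ (List.mem_singleton_self _) rfl

lemma exists_mem_darts_snd_eq {w : V} (hw : w ∈ p.support) (hwu : w ≠ u) :
    ∃ d ∈ p.darts, d.snd = w := by
  rw [← cons_map_snd_darts, List.mem_cons] at hw
  simpa using hw.resolve_left hwu

lemma exists_mem_darts_fst_notMem_snd_mem {S : Set V} (hu : u ∉ S) {w : V}
    (hw : w ∈ p.support) (hwS : w ∈ S) : ∃ d ∈ p.darts, d.fst ∉ S ∧ d.snd ∈ S := by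
  classical
  obtain ⟨d, hd, hfst, hsnd⟩ :=
    (p.takeUntil w hw).exists_boundary_dart Sᶜ hu (Set.notMem_compl_iff.2 hwS)
  exact ⟨d, p.darts_takeUntil_subset_darts hw hd, hfst, Set.notMem_compl_iff.1 hsnd⟩

lemma IsPath.card_le_of_forall_exists_dart (hp : p.IsPath) {T B : Finset V}
    (h : ∀ t ∈ T, ∃ d ∈ p.darts, d.snd = t ∧ d.fst ∈ B) : #T ≤ #B := by
  classical
  let D := p.darts.toFinset.filter fun d ↦ d.snd ∈ T ∧ d.fst ∈ B
  calc #T ≤ #(D.image (·.snd)) := card_le_card fun t ht ↦ by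
          obtain ⟨d, hd, rfl, hfst⟩ := h t ht
          exact mem_image_of_mem _ (by simp [D, hd, ht, hfst])
    _ ≤ #D := card_image_le
    _ = #(D.image (·.fst)) := (card_image_of_injOn fun d hd d' hd' ↦
          hp.injOn_dart_fst (by simp_all [D]) (by simp_all [D])).symm
    _ ≤ #B := card_le_card fun x hx ↦ by
          obtain ⟨d, hd, rfl⟩ := mem_image.1 hx
          exact (mem_filter.1 hd).2.2

end SimpleGraph.Walk

lemma lt_of_stdG_adj {n a b : ℕ} {x y : Fin n} (h : (stdG n a b).Adj x y) (hy : a ≤ (y : ℕ))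
    (hxy : (y : ℕ) < a + b ∨ (x : ℕ) < a + b) : (x : ℕ) < a := by
  obtain ⟨-, h⟩ := h
  omega

theorem stdG_not_exists_isHamiltonian {n a b : ℕ} (hab : a ≤ b + 1) (hn : a + b < n)
    {u v : Fin n} (hu : (u : ℕ) < a) (hv : (v : ℕ) < a) :
    ¬ ∃ p : (stdG n a b).Walk u v, p.IsHamiltonian := by
  rintro ⟨p, hp⟩
  let A : Finset (Fin n) := (range a).attachFin (fun m hm ↦ by simp at hm; omega)
  let I : Finset (Fin n) := (Ico a (a + b)).attachFin (fun m hm ↦ by simp at hm; omega)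
  let K : Set (Fin n) := {x | a + b ≤ (x : ℕ)}
  obtain ⟨d₀, hd₀, hd₀fst, hd₀snd⟩ := p.exists_mem_darts_fst_notMem_snd_mem (S := K)
    (by simp [K]; omega) (hp.mem_support ⟨a + b, hn⟩) (by simp [K])
  have hT : #(insert d₀.snd I) = b + 1 := by
    rw [card_insert_of_notMem (by simp [I, K] at hd₀snd ⊢; omega), card_attachFin]
    simp
  have hB : #(A.erase v) = a - 1 := by
    rw [card_erase_of_mem (by simpa [A]), card_attachFin, card_range]
  have hle : #(insert d₀.snd I) ≤ #(A.erase v) := by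
    refine hp.isPath.card_le_of_forall_exists_dart fun t ht ↦ ?_
    obtain ⟨d, hd, rfl, hfst⟩ : ∃ d ∈ p.darts, d.snd = t ∧ (d.fst : ℕ) < a := by
      rcases mem_insert.1 ht with rfl | ht
      · simp only [K, Set.mem_ofPred_eq] at hd₀fst hd₀snd
        exact ⟨d₀, hd₀, rfl, lt_of_stdG_adj d₀.adj (by omega) (by omega)⟩
      · simp only [I, mem_attachFin, mem_Ico] at ht
        obtain ⟨d, hd, rfl⟩ := p.exists_mem_darts_snd_eq (hp.mem_support t)
          (by rintro rfl; omega)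
        exact ⟨d, hd, rfl, lt_of_stdG_adj d.adj ht.1 (.inl ht.2)⟩
    exact ⟨d, hd, rfl, mem_erase.2 ⟨hp.isPath.dart_fst_ne_end hd, by simpa [A]⟩⟩
  omega

/-- The graph `K_{i+1} + (I_i ∪ K_{n-2i-1})` on `n` vertices with `1 ≤ i ≤ (n-2)/2`
is not Hamiltonian-connected: there are two distinct vertices with no Hamilton path
between them. -/
theorem stmt3 (n i : ℕ) (hi : 1 ≤ i) (hin : i ≤ (n - 2) / 2) :
    ∃ u v : Fin n, u ≠ v ∧
      ¬ ∃ p : (stdG n (i + 1) i).Walk u v, p.IsHamiltonian :=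
  ⟨⟨0, by omega⟩, ⟨1, by omega⟩, by simp [Fin.ext_iff],
    stdG_not_exists_isHamiltonian (by omega) (by omega) (by simp) (by simp; omega)⟩
end

section
/- Let n, k, i be integers with 0 ≤ k ≤ n-3 and 1 ≤ i ≤ (n-1-k)/2. Then the graph K_{i+k} + (I_i ∪ K_{n-2i-k}) on n vertices is not k-Hamiltonian: there is a set S of k vertices such that G - S is not Hamiltonian. -/
open Finset

namespace SimpleGraph

variable {V : Type*} {G : SimpleGraph V}

namespace Walk

variable [DecidableEq V] {v : V} {p : G.Walk v v}

lemma IsCycle.adj_formPerm_support_tail (hp : p.IsCycle) {x : V} (hx : x ∈ p.support) :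
    G.Adj x (p.support.tail.formPerm x) := by
  let q := p.rotate x hx
  have hq : q.IsCycle := hp.rotate hx
  rw [← List.formPerm_eq_of_isRotated hq.support_nodup (p.support_rotate x hx),
    ← support_tail_of_not_nil q hq.not_nil]
  obtain ⟨l, hl⟩ : ∃ l, q.tail.support = q.snd :: l := ⟨_, (cons_tail_support _).symm⟩
  have hlast : (q.snd :: l).getLast (List.cons_ne_nil _ _) = x := by
    simp_rw [← hl]; exact getLast_support _
  have hsucc : (q.snd :: l).formPerm x = q.snd := by
    simpa only [hlast] using List.formPerm_apply_getLast q.snd l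
  rw [hl, hsucc]
  exact q.adj_snd hq.not_nil

lemma IsHamiltonianCycle.isCycleOn_formPerm_support_tail (hp : p.IsHamiltonianCycle) :
    p.support.tail.formPerm.IsCycleOn Set.univ := by
  convert hp.isCycle.support_nodup.isCycleOn_formPerm
  rw [eq_comm, Set.eq_univ_iff_forall]
  intro x
  rw [← support_tail_of_not_nil p hp.not_nil]
  exact hp.isHamiltonian_tail.mem_support x

end Walk

variable [Fintype V] [DecidableEq V]

lemma IsHamiltonian.exists_perm_adj_isCycleOn [Nontrivial V] (hG : G.IsHamiltonian) :
    ∃ σ : Equiv.Perm V, (∀ x, G.Adj x (σ x)) ∧ σ.IsCycleOn Set.univ := by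
  obtain ⟨p, hp⟩ := hG.exists_isHamiltonianCycle (Classical.arbitrary V)
  exact ⟨_, fun x ↦ hp.isCycle.adj_formPerm_support_tail (hp.mem_support x),
    hp.isCycleOn_formPerm_support_tail⟩

lemma IsHamiltonian.card_lt_of_forall_adj_mem (hG : G.IsHamiltonian) {I J : Finset V}
    (hI : I.Nonempty) (hIJ : ∀ x ∈ I, ∀ y, G.Adj x y → y ∈ J) {v : V} (hvI : v ∉ I)
    (hvJ : v ∉ J) : #I < #J := by
  obtain ⟨x, hx⟩ := hI
  have : Nontrivial V := ⟨x, v, ne_of_mem_of_not_mem hx hvI⟩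
  obtain ⟨σ, hadj, hcyc⟩ := hG.exists_perm_adj_isCycleOn
  by_contra! hJI
  have hpred : I.image σ.symm = J := by
    refine eq_of_subset_of_card_le (fun y hy ↦ ?_) ?_
    · obtain ⟨z, hz, rfl⟩ := mem_image.mp hy
      exact hIJ z hz _ ((by simpa using hadj (σ.symm z) : G.Adj _ z).symm)
    · rwa [card_image_of_injective _ σ.symm.injective]
  have hmaps : Set.MapsTo σ ↑(I ∪ J) ↑(I ∪ J) := by
    intro y hy
    rcases mem_union.mp hy with hy | hy
    · exact mem_union_right _ (hIJ y hy _ (hadj y))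
    · obtain ⟨z, hz, rfl⟩ := mem_image.mp (hpred ▸ hy)
      simpa using mem_union_left J hz
  obtain ⟨m, hm⟩ := hcyc.exists_pow_eq' Set.finite_univ (Set.mem_univ x) (Set.mem_univ v)
  have hvIJ : v ∈ I ∪ J := hm ▸ hmaps.perm_pow m (mem_union_left J hx)
  exact (mem_union.mp hvIJ).elim hvI hvJ

end SimpleGraph

theorem stmt4_general (n k i : ℕ) (hi : 1 ≤ i) (hin : i ≤ (n - 1 - k) / 2) :
    ∃ S : Finset (Fin n), S.card = k ∧
      ¬ ((stdG n (i + k) i).induce {v | v ∉ S}).IsHamiltonian := by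
  have hn : 2 * i + k < n := by omega
  let S : Finset (Fin n) := Ico ⟨i, by omega⟩ ⟨i + k, by omega⟩
  refine ⟨S, by simp [S], fun hH ↦ ?_⟩
  let W := {v : Fin n | v ∉ S}
  have hW : ∀ v : Fin n, v ∈ W ↔ v.val < i ∨ i + k ≤ v.val := by
    intro v; simp [W, S, Fin.le_def, Fin.lt_def]; omega
  let J : Finset W := (Iio ⟨i, by omega⟩).subtype (· ∈ W)
  let I : Finset W := (Ico ⟨i + k, by omega⟩ ⟨2 * i + k, hn⟩).subtype (· ∈ W)
  have hJ : #J = i := by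
    rw [← card_map, subtype_map_of_mem, Fin.card_Iio]
    exact fun v hv ↦ (hW v).mpr (.inl (by simpa [Fin.lt_def] using hv))
  have hI : #I = i := by
    rw [← card_map, subtype_map_of_mem, Fin.card_Ico]
    · dsimp only; omega
    · exact fun v hv ↦ (hW v).mpr (.inr (by simp_all [Fin.le_def]))
  have hadj : ∀ x ∈ I, ∀ y, ((stdG n (i + k) i).induce W).Adj x y → y ∈ J := by
    rintro ⟨x, _⟩ hx ⟨y, hyW⟩ ⟨-, hxy⟩
    simp only [I, J, mem_subtype, mem_Ico, mem_Iio, Fin.le_def, Fin.lt_def,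
      Function.Embedding.subtype_apply] at hx hxy ⊢
    have := (hW y).mp hyW
    omega
  have hIne : I.Nonempty := ⟨⟨_, (hW ⟨i + k, by omega⟩).mpr (.inr le_rfl)⟩, by simp [I]; omega⟩
  have hvW : (⟨2 * i + k, hn⟩ : Fin n) ∈ W := (hW _).mpr (.inr (by simp only; omega))
  have := hH.card_lt_of_forall_adj_mem hIne hadj (v := ⟨_, hvW⟩) (by simp [I]) (by simp [J]; omega)
  omega

/-- The graph `K_{i+k} + (I_i ∪ K_{n-2i-k})` on `n` vertices, with `0 ≤ k ≤ n-3` and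
`1 ≤ i ≤ (n-1-k)/2`, is not `k`-Hamiltonian: there is a set `S` of `k` vertices whose
deletion leaves a non-Hamiltonian graph. -/
theorem stmt4 (n k i : ℕ) (hk : k ≤ n - 3) (hi : 1 ≤ i) (hin : i ≤ (n - 1 - k) / 2) :
    ∃ S : Finset (Fin n), S.card = k ∧
      ¬ ((stdG n (i + k) i).induce {v | v ∉ S}).IsHamiltonian :=
  stmt4_general n k i hi hin
end

section
/- Fix integers n ≥ 3, ℓ with -1 ≤ ℓ ≤ n-3, and t with 2 ≤ t ≤ n-1. For 1 ≤ i ≤ (n-1-ℓ)/2 define g(i) = i·C(i+ℓ, t) + (n-2i-ℓ)·C(n-i-1, t) + (i+ℓ)·C(n-1, t), where C(a,b) denotes the binomial coefficient. Then the sequence g is convex: for every integer i with 2 ≤ i ≤ ⌊(n-1-ℓ)/2⌋ - 1, g(i) - g(i-1) ≤ g(i+1) - g(i). -/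
/-
Each of the three summands of `g` is a linear function of `i` times a convex function of `i`.
For `u(i) = p(i) f(i)` with `p` linear of slope `d` one has
`Δ²u(i) = p(i) Δ²f(i) + d (f(i+1) - f(i-1))`, which is nonnegative as soon as `p(i) ≥ 0` and `f`
is convex and moves in the direction of `d`. Here `C(·, t)` is convex and increasing, the first
summand has slope `1`, the second has slope `-2` and the decreasing factor `C(n-i-1, t)`, and
the third has second difference `0`.
-/

/-- `g n ℓ t i` is the number of `t`-stars in the graph `K_{i+ℓ} + (I_i ∪ K_{n-2i-ℓ})`
on `n` vertices, computed from its degree list: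
`g(i) = i·C(i+ℓ,t) + (n-2i-ℓ)·C(n-i-1,t) + (i+ℓ)·C(n-1,t)`. -/
def g (n : ℕ) (ℓ : ℤ) (t : ℕ) (i : ℕ) : ℤ :=
  (i : ℤ) * ((((i : ℤ) + ℓ).toNat.choose t : ℕ) : ℤ)
    + ((n : ℤ) - 2 * (i : ℤ) - ℓ) * (((n - i - 1).choose t : ℕ) : ℤ)
    + ((i : ℤ) + ℓ) * (((n - 1).choose t : ℕ) : ℤ)

theorem Nat.two_mul_choose_succ_le_choose_add_choose_add_two (k t : ℕ) :
    2 * (k + 1).choose t ≤ k.choose t + (k + 2).choose t := by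
  cases t with
  | zero => simp
  | succ s =>
    have h₁ : (k + 2).choose (s + 1) = _ := Nat.choose_succ_succ' (k + 1) s
    have h₂ := Nat.choose_succ_succ' k s
    have h₃ : k.choose s ≤ (k + 1).choose s := Nat.choose_le_succ k s
    omega

/-- `(p + d) z - 2 p y + (p - d) x` is the second difference of `p(i) f(i)` at a point where
`p = p(i)` has slope `d` and `f` takes the consecutive values `x, y, z`. -/
theorem second_diff_linear_mul_nonneg {p d x y z : ℤ} (hp : 0 ≤ p) (hconv : 2 * y ≤ x + z)
    (hd : 0 ≤ d * (z - x)) : 0 ≤ (p + d) * z - 2 * (p * y) + (p - d) * x := by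
  have := mul_nonneg hp (sub_nonneg.2 hconv)
  linarith

theorem g_eq_of_eq {n t i k m : ℕ} {ℓ : ℤ} (hk : (i : ℤ) + ℓ = k) (hm : i + m + 1 = n) :
    g n ℓ t i = i * k.choose t + ((n : ℤ) - 2 * i - ℓ) * m.choose t
      + ((i : ℤ) + ℓ) * (n - 1).choose t := by
  rw [g, hk, Int.toNat_natCast, show n - i - 1 = m by omega]

theorem stmt6_general (n t : ℕ) (ℓ : ℤ) (hl1 : -1 ≤ ℓ) :
    ∀ i : ℕ, 2 ≤ i → (i : ℤ) ≤ ((n : ℤ) - 1 - ℓ) / 2 - 1 →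
      g n ℓ t i - g n ℓ t (i - 1) ≤ g n ℓ t (i + 1) - g n ℓ t i := by
  intro i hi hub
  obtain ⟨j, rfl⟩ : ∃ j, i = j + 1 := ⟨i - 1, by omega⟩
  obtain ⟨k, hk⟩ : ∃ k : ℕ, (k : ℤ) = j + ℓ := ⟨(j + ℓ).toNat, by omega⟩
  obtain ⟨m, rfl⟩ : ∃ m, n = j + m + 3 := ⟨n - j - 3, by omega⟩
  rw [Nat.add_sub_cancel, g_eq_of_eq (i := j) (k := k) (m := m + 2) hk.symm (by omega),
    g_eq_of_eq (i := j + 1) (k := k + 1) (m := m + 1) (by push_cast; omega) (by omega),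
    g_eq_of_eq (i := j + 1 + 1) (k := k + 2) (m := m) (by push_cast; omega) (by omega)]
  have hstar := second_diff_linear_mul_nonneg (p := (j : ℤ) + 1) (d := 1)
    (x := k.choose t) (y := (k + 1).choose t) (z := (k + 2).choose t) (by positivity)
    (by exact_mod_cast Nat.two_mul_choose_succ_le_choose_add_choose_add_two k t)
    (by simpa using Nat.choose_le_choose t (by omega : k ≤ k + 2))
  have hclique := second_diff_linear_mul_nonneg (p := (m : ℤ) + 1 - j - ℓ) (d := -2)
    (x := (m + 2).choose t) (y := (m + 1).choose t) (z := m.choose t) (by omega)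
    (by have := Nat.two_mul_choose_succ_le_choose_add_choose_add_two m t; omega)
    (by have := Nat.choose_le_choose t (by omega : m ≤ m + 2); omega)
  push_cast at hstar hclique ⊢
  linarith

/-- Convexity of the `t`-star count `g(i)` of `K_{i+ℓ} + (I_i ∪ K_{n-2i-ℓ})`:
for `2 ≤ i ≤ ⌊(n-1-ℓ)/2⌋ - 1`, `g(i) - g(i-1) ≤ g(i+1) - g(i)`. -/
theorem stmt6 (n t : ℕ) (ℓ : ℤ) (hn : 3 ≤ n) (hl1 : -1 ≤ ℓ) (hl2 : ℓ ≤ (n : ℤ) - 3)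
    (ht1 : 2 ≤ t) (ht2 : t ≤ n - 1) :
    ∀ i : ℕ, 2 ≤ i → (i : ℤ) ≤ ((n : ℤ) - 1 - ℓ) / 2 - 1 →
      g n ℓ t i - g n ℓ t (i - 1) ≤ g n ℓ t (i + 1) - g n ℓ t i :=
  stmt6_general n t ℓ hl1
end

section
/- Fix integers n ≥ 3, ℓ with -1 ≤ ℓ ≤ n-3, and t with 2 ≤ t ≤ n-1, and let i_d, i_0 be integers with 1 ≤ i_d ≤ i_0 ≤ ⌊(n-1-ℓ)/2⌋. Define g(i) = i·C(i+ℓ, t) + (n-2i-ℓ)·C(n-i-1, t) + (i+ℓ)·C(n-1, t). Then max over i_d ≤ i ≤ i_0 of g(i) equals max(g(i_d), g(i_0)). -/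
/-!
On the range `2i + ℓ ≤ n` the function `g` is discretely convex (its forward difference is
nondecreasing), so on an interval it is maximal at an endpoint. Convexity comes from writing
`g(i) = i·F(i+ℓ) + (n-2i-ℓ)·F(n-1-i) + (linear in i)` with `F(m) = C(max m 0, t)`, which is
nondecreasing and convex on `ℤ`. By the discrete Leibniz rule
`Δ²(uv)(j) = Δ²u(j)·v(j+2) + 2·Δu(j)·Δv(j+1) + u(j)·Δ²v(j)`, a product of a linear `u ≥ 0` with a
convex `v` is convex as soon as `u` and `v` move in the same direction, which they do in both
products.
-/

open fwdDiff

section DiscreteConvexity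

variable {β : Type*} [AddCommGroup β] [LinearOrder β] [IsOrderedAddMonoid β] {f : ℕ → β} {a b : ℕ}

lemma monotoneOn_Icc_of_fwdDiff_nonneg (hf : ∀ j ∈ Set.Ico a b, 0 ≤ Δ_[1] f j) :
    MonotoneOn f (Set.Icc a b) :=
  monotoneOn_of_le_succ Set.ordConnected_Icc fun j _ hj hj' => by
    rw [Order.succ_eq_add_one] at hj' ⊢
    exact sub_nonneg.1 (hf j ⟨hj.1, hj'.2⟩)

lemma antitoneOn_Icc_of_fwdDiff_nonpos (hf : ∀ j ∈ Set.Ico a b, Δ_[1] f j ≤ 0) :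
    AntitoneOn f (Set.Icc a b) :=
  antitoneOn_of_succ_le Set.ordConnected_Icc fun j _ hj hj' => by
    rw [Order.succ_eq_add_one] at hj' ⊢
    exact sub_nonpos.1 (hf j ⟨hj.1, hj'.2⟩)

lemma le_max_of_monotoneOn_fwdDiff (hf : MonotoneOn (Δ_[1] f) (Set.Ico a b)) {k : ℕ}
    (hk : k ∈ Set.Icc a b) : f k ≤ max (f a) (f b) := by
  obtain rfl | hak := eq_or_lt_of_le hk.1
  · exact le_max_left _ _
  obtain ⟨m, rfl⟩ : ∃ m, k = m + 1 := ⟨k - 1, by omega⟩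
  have hm : m ∈ Set.Ico a b := ⟨by omega, hk.2⟩
  by_cases hdm : Δ_[1] f m ≤ 0
  · have hanti : AntitoneOn f (Set.Icc a (m + 1)) :=
      antitoneOn_Icc_of_fwdDiff_nonpos fun j hj =>
        (hf ⟨hj.1, hj.2.trans_le hm.2⟩ hm (Nat.lt_succ_iff.1 hj.2)).trans hdm
    exact (hanti ⟨le_rfl, hk.1⟩ ⟨hk.1, le_rfl⟩ hk.1).trans (le_max_left _ _)
  · have hmono : MonotoneOn f (Set.Icc (m + 1) b) :=
      monotoneOn_Icc_of_fwdDiff_nonneg fun j hj =>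
        have hmj : m ≤ j := Nat.le_of_succ_le hj.1
        (not_le.1 hdm).le.trans (hf hm ⟨hm.1.trans hmj, hj.2⟩ hmj)
    exact (hmono ⟨le_rfl, hk.2⟩ ⟨hk.2, le_rfl⟩ hk.2).trans (le_max_right _ _)

end DiscreteConvexity

def truncChoose (t : ℕ) (m : ℤ) : ℤ := m.toNat.choose t

lemma monotone_truncChoose (t : ℕ) : Monotone (truncChoose t) := fun _ _ h => by
  unfold truncChoose
  exact_mod_cast Nat.choose_le_choose t (Int.toNat_le_toNat h)

lemma monotone_fwdDiff_choose (t : ℕ) : Monotone (Δ_[1] fun x : ℕ => (x.choose t : ℤ)) := by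
  cases t with
  | zero => simp only [Nat.choose_zero_right, fwdDiff_const]; exact monotone_const
  | succ s => rw [fwdDiff_choose]; exact fun _ _ h => Int.ofNat_le.2 (Nat.choose_le_choose s h)

lemma monotone_fwdDiff_truncChoose (t : ℕ) : Monotone (Δ_[1] (truncChoose t)) := by
  refine monotone_of_le_succ fun m _ => ?_
  rw [Order.succ_eq_add_one]
  rcases lt_or_ge m 0 with hm | hm
  · have h0 : Δ_[1] (truncChoose t) m = 0 := by
      simp only [fwdDiff, truncChoose, Int.toNat_of_nonpos hm.le,
        Int.toNat_of_nonpos (by omega : m + 1 ≤ 0), sub_self]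
    rw [h0]
    exact sub_nonneg.2 (monotone_truncChoose t (by omega))
  · lift m to ℕ using hm
    exact_mod_cast monotone_fwdDiff_choose t (Nat.le_succ m)

lemma g_eq_truncChoose (n : ℕ) (ℓ : ℤ) (t i : ℕ) :
    g n ℓ t i = i * truncChoose t (i + ℓ) + (n - 2 * i - ℓ) * truncChoose t (n - 1 - i)
      + (i + ℓ) * ((n - 1).choose t : ℤ) := by
  have hY : ((n : ℤ) - 1 - i).toNat = n - i - 1 := by omega
  simp only [g, truncChoose, hY]

lemma fwdDiff_g_le_fwdDiff_g_succ (n : ℕ) (ℓ : ℤ) (t : ℕ) {j : ℕ} (hj : 2 * (j : ℤ) + ℓ ≤ n) :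
    Δ_[1] (g n ℓ t) j ≤ Δ_[1] (g n ℓ t) (j + 1) := by
  set F := truncChoose t
  have hX : F (j + ℓ + 1) ≤ F (j + ℓ + 2) := monotone_truncChoose t (by omega)
  have hX2 : Δ_[1] F (j + ℓ) ≤ Δ_[1] F (j + ℓ + 1) := monotone_fwdDiff_truncChoose t (by omega)
  have hY : F (n - j - 3) ≤ F (n - j - 2) := monotone_truncChoose t (by omega)
  have hY2 : Δ_[1] F (n - j - 3) ≤ Δ_[1] F (n - j - 2) := monotone_fwdDiff_truncChoose t (by omega)
  have hj0 : (0 : ℤ) ≤ j := by positivity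
  have hu : (0 : ℤ) ≤ n - 2 * j - ℓ := by omega
  simp only [fwdDiff, g_eq_truncChoose] at hX2 hY2 ⊢
  push_cast
  ring_nf at hX hX2 hY hY2 ⊢
  linarith [mul_le_mul_of_nonneg_left hX2 hj0, mul_le_mul_of_nonneg_left hY2 hu]

theorem stmt7_general (n t : ℕ) (ℓ : ℤ) (i_d i_0 : ℕ) (hdi : i_d ≤ i_0)
    (hi0 : (i_0 : ℤ) ≤ ((n : ℤ) - 1 - ℓ) / 2) :
    IsGreatest ((fun i => g n ℓ t i) '' Set.Icc i_d i_0)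
      (max (g n ℓ t i_d) (g n ℓ t i_0)) := by
  have hconv : MonotoneOn (Δ_[1] (g n ℓ t)) (Set.Ico i_d i_0) :=
    monotoneOn_of_le_succ Set.ordConnected_Ico fun j _ _ hj => by
      rw [Order.succ_eq_add_one] at hj ⊢
      exact fwdDiff_g_le_fwdDiff_g_succ n ℓ t (by have := hj.2; omega)
  refine ⟨?_, ?_⟩
  · rcases max_choice (g n ℓ t i_d) (g n ℓ t i_0) with h | h <;> rw [h]
    exacts [⟨i_d, ⟨le_rfl, hdi⟩, rfl⟩, ⟨i_0, ⟨hdi, le_rfl⟩, rfl⟩]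
  · rintro _ ⟨k, hk, rfl⟩
    exact le_max_of_monotoneOn_fwdDiff hconv hk

/-- The maximum of the `t`-star count `g(i)` of `K_{i+ℓ} + (I_i ∪ K_{n-2i-ℓ})` over
`i_d ≤ i ≤ i_0` is `max (g i_d) (g i_0)`. -/
theorem stmt7 (n t : ℕ) (ℓ : ℤ) (hn : 3 ≤ n) (hl1 : -1 ≤ ℓ) (hl2 : ℓ ≤ (n : ℤ) - 3)
    (ht1 : 2 ≤ t) (ht2 : t ≤ n - 1) (i_d i_0 : ℕ) (hd : 1 ≤ i_d) (hdi : i_d ≤ i_0)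
    (hi0 : (i_0 : ℤ) ≤ ((n : ℤ) - 1 - ℓ) / 2) :
    IsGreatest ((fun i => g n ℓ t i) '' Set.Icc i_d i_0)
      (max (g n ℓ t i_d) (g n ℓ t i_0)) :=
  stmt7_general n t ℓ i_d i_0 hdi hi0
end

section
/- Fix integers n ≥ 3, ℓ with -1 ≤ ℓ ≤ n-3, and t with 2 ≤ t ≤ n-1, and define g(i) = i·C(i+ℓ, t) + (n-2i-ℓ)·C(n-i-1, t) + (i+ℓ)·C(n-1, t) for 1 ≤ i ≤ i_0 := ⌊(n-1-ℓ)/2⌋. Fix i_d with 1 ≤ i_d ≤ i_0. If i_d < i < i_0, then g(i) < max(g(i_d), g(i_0)); that is, the maximum of g on [i_d, i_0] is attained only at an endpoint. -/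
/-!
Write `Δ j = g (j + 1) - g j`. On the relevant range the second difference
`Δ (j + 1) - Δ j` is a sum of nonnegative binomial terms, coming from the discrete
Leibniz rule applied to `i · C(i + ℓ, t)` and to `(n - 2i - ℓ) · C(n - i - 1, t)`; it is
positive as long as `C(n - i - 1, t - 1) ≠ 0`, and past that point every binomial
coefficient `C(·, t)` vanishes except `C(n - 1, t)`, so `g` is linear with slope
`C(n - 1, t) ≥ 1`. Hence the increments are nondecreasing and can only stay constant
while positive, so `g` is either increasing from `i` up to `i₀` or decreasing from `i`
down to `i_d`.
-/

section Increments

variable {α : Type*} [AddCommGroup α] [LinearOrder α] [IsOrderedAddMonoid α]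

theorem lt_max_of_increment_lt_or_eq_pos {f : ℕ → α} {a b : ℕ}
    (hf : ∀ j, a ≤ j → j + 2 ≤ b →
      f (j + 1) - f j < f (j + 2) - f (j + 1) ∨
        (f (j + 1) - f j = f (j + 2) - f (j + 1) ∧ 0 < f (j + 1) - f j))
    {i : ℕ} (hai : a < i) (hib : i < b) : f i < max (f a) (f b) := by
  set Δ : ℕ → α := fun j ↦ f (j + 1) - f j
  have hmono : MonotoneOn Δ (Set.Ico a b) :=
    monotoneOn_of_le_add_one Set.ordConnected_Ico fun j _ hj hj₁ ↦
      (hf j hj.1 hj₁.2).elim le_of_lt fun h ↦ h.1.le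
  rcases lt_or_ge 0 (Δ i) with hpos | hnonpos
  · have hinc : StrictMonoOn f (Set.Icc i b) :=
      strictMonoOn_of_lt_add_one Set.ordConnected_Icc fun k _ hk hk₁ ↦ sub_pos.mp <|
        hpos.trans_le <| hmono ⟨hai.le, hib⟩ ⟨hai.le.trans hk.1, hk₁.2⟩ hk.1
    exact lt_max_of_lt_right (hinc ⟨le_rfl, hib.le⟩ ⟨hib.le, le_rfl⟩ hib)
  · obtain ⟨j, rfl⟩ : ∃ j, i = j + 1 := ⟨i - 1, by omega⟩
    have hneg : Δ j < 0 := by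
      rcases hf j (Nat.le_of_lt_succ hai) hib with h | h
      · exact h.trans_le hnonpos
      · exact (h.2.trans_le (h.1.trans_le hnonpos)).false.elim
    have hdec : StrictAntiOn f (Set.Icc a (j + 1)) :=
      strictAntiOn_of_add_one_lt Set.ordConnected_Icc fun k _ hk hk₁ ↦ sub_neg.mp <|
        (hmono ⟨hk.1, by have := hk₁.2; omega⟩ ⟨Nat.le_of_lt_succ hai, by omega⟩
          (Nat.le_of_succ_le_succ hk₁.2)).trans_lt hneg
    exact lt_max_of_lt_left (hdec ⟨le_rfl, hai.le⟩ ⟨hai.le, le_rfl⟩ hai)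

end Increments

theorem choose_second_diff_weighted (p d : ℤ) (m s : ℕ) :
    (p + d) * ((m + 2).choose (s + 2) : ℤ) - 2 * p * ((m + 1).choose (s + 2) : ℤ)
        + (p - d) * (m.choose (s + 2) : ℤ)
      = p * m.choose s + d * ((m + 1).choose (s + 1) + m.choose (s + 1)) := by
  have h₁ := Nat.choose_succ_succ' (m + 1) (s + 1)
  have h₂ := Nat.choose_succ_succ' m (s + 1)
  have h₃ := Nat.choose_succ_succ' m s
  push_cast [h₁, h₂, h₃]
  ring

theorem g_second_diff (n : ℕ) (ℓ : ℤ) (s j m y : ℕ) (hm : (j : ℤ) + ℓ = m)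
    (hn : n = j + y + 3) :
    g n ℓ (s + 2) (j + 2) - 2 * g n ℓ (s + 2) (j + 1) + g n ℓ (s + 2) j
      = ((j : ℤ) + 1) * m.choose s + ((m + 1).choose (s + 1) + m.choose (s + 1))
        + ((y : ℤ) + 1 - m) * y.choose s + 2 * ((y + 1).choose (s + 1) + y.choose (s + 1)) := by
  obtain rfl : ℓ = m - j := by omega
  subst hn
  have e₀ : ((j : ℤ) + (m - j)).toNat = m := by omega
  have e₁ : (((j + 1 : ℕ) : ℤ) + (m - j)).toNat = m + 1 := by omega
  have e₂ : (((j + 2 : ℕ) : ℤ) + (m - j)).toNat = m + 2 := by omega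
  have f₀ : j + y + 3 - j - 1 = y + 2 := by omega
  have f₁ : j + y + 3 - (j + 1) - 1 = y + 1 := by omega
  have f₂ : j + y + 3 - (j + 2) - 1 = y := by omega
  simp only [g, e₀, e₁, e₂, f₀, f₁, f₂]
  push_cast
  linear_combination choose_second_diff_weighted ((j : ℤ) + 1) 1 m s
    + choose_second_diff_weighted ((y : ℤ) + 1 - m) 2 y s

theorem g_eq_mul_choose_of_lt {n t i : ℕ} {ℓ : ℤ} (h₁ : ((i : ℤ) + ℓ).toNat < t)
    (h₂ : n - i - 1 < t) : g n ℓ t i = ((i : ℤ) + ℓ) * (n - 1).choose t := by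
  simp [g, Nat.choose_eq_zero_of_lt h₁, Nat.choose_eq_zero_of_lt h₂]

theorem g_increment_lt_or_eq_choose (n t : ℕ) (ℓ : ℤ) (ht : 2 ≤ t) (j : ℕ)
    (hj : 0 ≤ (j : ℤ) + ℓ) (hjn : 2 * ((j : ℤ) + 2) ≤ n - 1 - ℓ) :
    g n ℓ t (j + 1) - g n ℓ t j < g n ℓ t (j + 2) - g n ℓ t (j + 1) ∨
      (g n ℓ t (j + 1) - g n ℓ t j = (n - 1).choose t ∧
        g n ℓ t (j + 2) - g n ℓ t (j + 1) = (n - 1).choose t) := by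
  obtain ⟨s, rfl⟩ : ∃ s, t = s + 2 := ⟨t - 2, by omega⟩
  obtain ⟨m, hm⟩ : ∃ m : ℕ, (j : ℤ) + ℓ = m := ⟨_, (Int.toNat_of_nonneg hj).symm⟩
  obtain ⟨y, hy⟩ : ∃ y, n = j + y + 3 := ⟨n - j - 3, by omega⟩
  rcases le_or_gt s y with hsy | hys
  · left
    have hsecond := g_second_diff n ℓ s j m y hm hy
    have hpos : (0 : ℤ) < (y + 1).choose (s + 1) := by exact_mod_cast Nat.choose_pos (by omega)
    have hw : (0 : ℤ) ≤ ((y : ℤ) + 1 - m) * y.choose s :=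
      mul_nonneg (by omega) (Nat.cast_nonneg _)
    have hrest : (0 : ℤ) ≤ ((j : ℤ) + 1) * m.choose s
        + ((m + 1).choose (s + 1) + m.choose (s + 1)) + 2 * y.choose (s + 1) := by positivity
    linarith
  · right
    rw [g_eq_mul_choose_of_lt (i := j) (by omega) (by omega),
      g_eq_mul_choose_of_lt (i := j + 1) (by omega) (by omega),
      g_eq_mul_choose_of_lt (i := j + 2) (by omega) (by omega)]
    push_cast
    constructor <;> ring

theorem stmt8_general (n t : ℕ) (ℓ : ℤ) (hl1 : -1 ≤ ℓ)
    (ht1 : 2 ≤ t) (ht2 : t ≤ n - 1) (i_d i_0 : ℕ) (hd : 1 ≤ i_d)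
    (hi0 : (i_0 : ℤ) ≤ ((n : ℤ) - 1 - ℓ) / 2) :
    ∀ i : ℕ, i_d < i → i < i_0 → g n ℓ t i < max (g n ℓ t i_d) (g n ℓ t i_0) := by
  intro i hdi hi
  refine lt_max_of_increment_lt_or_eq_pos (fun j hj hjb ↦ ?_) hdi hi
  rcases g_increment_lt_or_eq_choose n t ℓ ht1 j (by omega) (by omega) with h | ⟨h₁, h₂⟩
  · exact Or.inl h
  · exact Or.inr ⟨h₁.trans h₂.symm, h₁ ▸ by exact_mod_cast Nat.choose_pos ht2⟩

/-- The `t`-star count `g(i)` of `K_{i+ℓ} + (I_i ∪ K_{n-2i-ℓ})` attains its maximum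
over `[i_d, i_0]` only at the endpoints: if `i_d < i < i_0` then
`g(i) < max (g i_d) (g i_0)`. -/
theorem stmt8 (n t : ℕ) (ℓ : ℤ) (hn : 3 ≤ n) (hl1 : -1 ≤ ℓ) (hl2 : ℓ ≤ (n : ℤ) - 3)
    (ht1 : 2 ≤ t) (ht2 : t ≤ n - 1) (i_d i_0 : ℕ) (hd : 1 ≤ i_d) (hdi : i_d ≤ i_0)
    (hi0 : (i_0 : ℤ) ≤ ((n : ℤ) - 1 - ℓ) / 2) :
    ∀ i : ℕ, i_d < i → i < i_0 → g n ℓ t i < max (g n ℓ t i_d) (g n ℓ t i_0) :=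
  stmt8_general n t ℓ hl1 ht1 ht2 i_d i_0 hd hi0
end

section
/- Fix integers n ≥ 3, k with 1 ≤ k ≤ n-2, and t with 2 ≤ t ≤ n-1. For 1 ≤ i ≤ (n-k+1)/2 define h(i) = i·C(i+k-2, t) + (n-k-i+1)·C(n-i-1, t) + (k-1)·C(n-1, t). Then h is convex: for all i with 2 ≤ i ≤ ⌊(n-k+1)/2⌋ - 1, h(i) - h(i-1) ≤ h(i+1) - h(i). Consequently the maximum of h over i_d ≤ i ≤ i_0 (for any 1 ≤ i_d ≤ i_0 ≤ ⌊(n-k+1)/2⌋) equals max(h(i_d), h(i_0)). -/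
/-!
Writing `g(i) = i·C(i+k-2, t)` for the stars centred in the clique `K_i`, one has
`h(i) = g(i) + g(n-k+1-i) + (k-1)·C(n-1,t)`, so convexity of `h` reduces to convexity of `g`,
which follows from Pascal's rule and the monotonicity of `C(·, s)`. A discretely convex
sequence attains its maximum on an interval at an endpoint: a leftmost interior maximiser `m`
would satisfy `h(m-1) + h(m+1) < 2h(m)`.
-/

/-- `hStar n k t i` is the number of `t`-stars in the graph
`K_{k-1} + (K_i ∪ K_{n-k-i+1})` on `n` vertices:
`h(i) = i·C(i+k-2,t) + (n-k-i+1)·C(n-i-1,t) + (k-1)·C(n-1,t)`. -/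
def hStar (n k t i : ℕ) : ℕ :=
  i * (i + k - 2).choose t + (n - k + 1 - i) * (n - i - 1).choose t +
    (k - 1) * (n - 1).choose t

open Set

theorem isGreatest_image_Icc_max_of_convex {β : Type*} [AddCommMonoid β] [LinearOrder β]
    [IsOrderedCancelAddMonoid β] {f : ℕ → β} {a b : ℕ} (hab : a ≤ b)
    (hf : ∀ i, a < i → i < b → f i + f i ≤ f (i - 1) + f (i + 1)) :
    IsGreatest (f '' Icc a b) (max (f a) (f b)) := by
  refine ⟨?_, ?_⟩
  · rcases max_choice (f a) (f b) with h | h <;> rw [h]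
    exacts [⟨a, ⟨le_rfl, hab⟩, rfl⟩, ⟨b, ⟨hab, le_rfl⟩, rfl⟩]
  classical
  have hmax : ∃ m, m ∈ Icc a b ∧ ∀ j ∈ Icc a b, f j ≤ f m := by
    obtain ⟨m, hm, hmax⟩ := (Finset.Icc a b).exists_max_image f ⟨a, by simp [hab]⟩
    exact ⟨m, by simpa using hm, fun j hj => hmax j (by simpa using hj)⟩
  set m := Nat.find hmax
  obtain ⟨⟨ham, hmb⟩, hm_max⟩ := Nat.find_spec hmax
  rintro _ ⟨i, hi, rfl⟩
  refine (hm_max i hi).trans ?_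
  rcases ham.eq_or_lt with ham | ham
  · rw [← ham]; exact le_max_left _ _
  rcases hmb.eq_or_lt with hmb | hmb
  · rw [hmb]; exact le_max_right _ _
  have hprev : f (m - 1) < f m := by
    have := Nat.find_min hmax (show m - 1 < m by omega)
    push Not at this
    obtain ⟨j, hj, hlt⟩ := this ⟨by omega, by omega⟩
    exact hlt.trans_le (hm_max j hj)
  have hnext : f (m + 1) ≤ f m := hm_max _ ⟨by omega, by omega⟩
  exact absurd (hf m ham hmb) (add_lt_add_of_lt_of_le hprev hnext).not_ge

lemma two_mul_succ_mul_choose_le (j c t : ℕ) :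
    2 * ((j + 2) * (j + c + 1).choose t) ≤
      (j + 1) * (j + c).choose t + (j + 3) * (j + c + 2).choose t := by
  rcases t with _ | s
  · simp only [Nat.choose_zero_right]
    omega
  have pascal₂ :
      (j + c + 2).choose (s + 1) = (j + c + 1).choose s + (j + c + 1).choose (s + 1) :=
    Nat.choose_succ_succ _ _
  have pascal₁ : (j + c + 1).choose (s + 1) = (j + c).choose s + (j + c).choose (s + 1) :=
    Nat.choose_succ_succ _ _
  have hmono : (j + c).choose s ≤ (j + c + 1).choose s := Nat.choose_le_choose _ (by omega)
  nlinarith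

/-- The number of `t`-stars centred in the `K_i` part of `K_{k-1} + (K_i ∪ K_m)`. -/
def cliqueStarCount (k t i : ℕ) : ℕ :=
  i * (i + k - 2).choose t

lemma cliqueStarCount_convex {k t i : ℕ} (hk : 1 ≤ k) (hi : 2 ≤ i) :
    2 * cliqueStarCount k t i ≤ cliqueStarCount k t (i - 1) + cliqueStarCount k t (i + 1) := by
  obtain ⟨j, rfl⟩ : ∃ j, i = j + 2 := ⟨i - 2, by omega⟩
  obtain ⟨c, rfl⟩ : ∃ c, k = c + 1 := ⟨k - 1, by omega⟩
  have h := two_mul_succ_mul_choose_le j c t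
  simp only [cliqueStarCount, show j + 2 - 1 = j + 1 by omega,
    show j + 2 + (c + 1) - 2 = j + c + 1 by omega, show j + 1 + (c + 1) - 2 = j + c by omega,
    show j + 2 + 1 + (c + 1) - 2 = j + c + 2 by omega]
  linarith

lemma hStar_eq_cliqueStarCount {n k t i : ℕ} (hi : i + k ≤ n) :
    hStar n k t i = cliqueStarCount k t i + cliqueStarCount k t (n - k + 1 - i) +
      (k - 1) * (n - 1).choose t := by
  rw [hStar, cliqueStarCount, cliqueStarCount, show n - k + 1 - i + k - 2 = n - i - 1 by omega]

lemma hStar_convex {n k t i : ℕ} (hk : 1 ≤ k) (hi : 2 ≤ i) (hin : i + k + 1 ≤ n) :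
    2 * hStar n k t i ≤ hStar n k t (i - 1) + hStar n k t (i + 1) := by
  have hleft := cliqueStarCount_convex (t := t) hk hi
  have hright := cliqueStarCount_convex (t := t) hk (show 2 ≤ n - k + 1 - i by omega)
  rw [hStar_eq_cliqueStarCount (by omega), hStar_eq_cliqueStarCount (by omega),
    hStar_eq_cliqueStarCount (by omega), show n - k + 1 - (i - 1) = n - k + 1 - i + 1 by omega,
    show n - k + 1 - (i + 1) = n - k + 1 - i - 1 by omega]
  linarith

theorem stmt12_general (n k t : ℕ) (hk1 : 1 ≤ k) :
    (∀ i : ℕ, 2 ≤ i → i ≤ (n - k + 1) / 2 - 1 →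
      (hStar n k t i : ℤ) - (hStar n k t (i - 1) : ℤ) ≤
        (hStar n k t (i + 1) : ℤ) - (hStar n k t i : ℤ)) ∧
      ∀ i_d i_0 : ℕ, 1 ≤ i_d → i_d ≤ i_0 → i_0 ≤ (n - k + 1) / 2 →
        IsGreatest ((fun i => hStar n k t i) '' Set.Icc i_d i_0)
          (max (hStar n k t i_d) (hStar n k t i_0)) := by
  refine ⟨fun i hi hin => ?_, fun i_d i_0 hd hd0 h0 => ?_⟩
  · have := hStar_convex (t := t) hk1 hi (show i + k + 1 ≤ n by omega)
    omega
  · refine isGreatest_image_Icc_max_of_convex hd0 fun i hdi hi0 => ?_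
    have := hStar_convex (t := t) hk1 (show 2 ≤ i by omega) (show i + k + 1 ≤ n by omega)
    omega

/-- For `n ≥ 3`, `1 ≤ k ≤ n-2`, `2 ≤ t ≤ n-1`, the `t`-star count `h(i)` of
`K_{k-1} + (K_i ∪ K_{n-k-i+1})` is convex on `1 ≤ i ≤ (n-k+1)/2`:
`h(i) - h(i-1) ≤ h(i+1) - h(i)` for `2 ≤ i ≤ ⌊(n-k+1)/2⌋ - 1`; consequently its
maximum over any `[i_d, i_0]` inside the range is `max (h i_d) (h i_0)`. -/
theorem stmt12 (n k t : ℕ) (hn : 3 ≤ n) (hk1 : 1 ≤ k) (hk2 : k ≤ n - 2)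
    (ht1 : 2 ≤ t) (ht2 : t ≤ n - 1) :
    (∀ i : ℕ, 2 ≤ i → i ≤ (n - k + 1) / 2 - 1 →
      (hStar n k t i : ℤ) - (hStar n k t (i - 1) : ℤ) ≤
        (hStar n k t (i + 1) : ℤ) - (hStar n k t i : ℤ)) ∧
      ∀ i_d i_0 : ℕ, 1 ≤ i_d → i_d ≤ i_0 → i_0 ≤ (n - k + 1) / 2 →
        IsGreatest ((fun i => hStar n k t i) '' Set.Icc i_d i_0)
          (max (hStar n k t i_d) (hStar n k t i_0)) :=
  stmt12_general n k t hk1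
end

section
/- Let n, ℓ, t be integers with -1 ≤ ℓ ≤ n-3 and (n+ℓ+1)/2 ≤ t ≤ n-1, and set i_0 = ⌊(n-1-ℓ)/2⌋. Then C(ℓ+1, t) + (ℓ+1)·C(n-1, t) + (n-ℓ-2)·C(n-2, t) ≤ i_0·C(i_0+ℓ, t) + (i_0+ℓ)·C(n-1, t) + (n-2i_0-ℓ)·C(n-i_0-1, t). Moreover, if 0 ≤ ℓ ≤ n-5, the inequality is strict. -/
/-!
Since `2t ≥ n + ℓ + 1`, the binomial coefficients `C(ℓ+1,t)`, `C(i₀+ℓ,t)` and `C(n-i₀-1,t)` all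
vanish, so the claim reduces to `(n-ℓ-2)·C(n-2,t) ≤ (i₀-1)·C(n-1,t)`. Multiplying by `n-1` and
using `C(n-2,t)·(n-1) = C(n-1,t)·(n-1-t)`, this follows from `n-ℓ-2 ≤ n-1` and `n-1-t ≤ i₀-1`;
for `ℓ ≥ 0` the first of these is strict, and `ℓ ≤ n-5` makes `i₀-1` positive.
-/

namespace Nat

theorem choose_pred_mul_self (m t : ℕ) : (m - 1).choose t * m = m.choose t * (m - t) := by
  cases m with
  | zero => simp
  | succ m => simpa using choose_mul_succ_eq m t

theorem mul_choose_pred_le_mul_choose {a c m t : ℕ} (ha : a ≤ m) (hc : m - t ≤ c) :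
    a * (m - 1).choose t ≤ c * m.choose t := by
  rcases Nat.eq_zero_or_pos m with rfl | hm
  · simp [Nat.le_zero.mp ha]
  refine Nat.le_of_mul_le_mul_right ?_ hm
  calc a * (m - 1).choose t * m = a * (m.choose t * (m - t)) := by
        rw [mul_assoc, choose_pred_mul_self]
    _ ≤ m * (m.choose t * c) := by gcongr
    _ = c * m.choose t * m := by ring

theorem mul_choose_pred_lt_mul_choose {a c m t : ℕ} (ha : a < m) (hc : m - t ≤ c) (hc0 : 0 < c)
    (ht : t ≤ m) : a * (m - 1).choose t < c * m.choose t := by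
  have hchoose : 0 < m.choose t := choose_pos ht
  refine Nat.lt_of_mul_lt_mul_right (a := m) ?_
  calc a * (m - 1).choose t * m = a * (m.choose t * (m - t)) := by
        rw [mul_assoc, choose_pred_mul_self]
    _ ≤ a * (m.choose t * c) := by gcongr
    _ < m * (m.choose t * c) := by gcongr
    _ = c * m.choose t * m := by ring

end Nat

/-- For `-1 ≤ ℓ ≤ n-3` and `(n+ℓ+1)/2 ≤ t ≤ n-1` (i.e. `n+ℓ+1 ≤ 2t`), with
`i₀ = ⌊(n-1-ℓ)/2⌋`, the number of `t`-stars of `G₁ = K_{ℓ+1} + (I_1 ∪ K_{n-ℓ-2})`,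
namely `C(ℓ+1,t) + (ℓ+1)·C(n-1,t) + (n-ℓ-2)·C(n-2,t)`, is at most that of
`G_{i₀} = K_{i₀+ℓ} + (I_{i₀} ∪ K_{n-2i₀-ℓ})`, namely
`i₀·C(i₀+ℓ,t) + (i₀+ℓ)·C(n-1,t) + (n-2i₀-ℓ)·C(n-i₀-1,t)`; moreover the
inequality is strict when `0 ≤ ℓ ≤ n-5`. -/
theorem stmt13 (n t : ℕ) (ℓ : ℤ) (hl1 : -1 ≤ ℓ) (hl2 : ℓ ≤ (n : ℤ) - 3)
    (ht1 : (n : ℤ) + ℓ + 1 ≤ 2 * (t : ℤ)) (ht2 : t ≤ n - 1)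
    (i0 : ℕ) (hi0 : (i0 : ℤ) = ((n : ℤ) - 1 - ℓ) / 2) :
    (((ℓ + 1).toNat.choose t : ℕ) : ℤ) + (ℓ + 1) * (((n - 1).choose t : ℕ) : ℤ) +
        ((n : ℤ) - ℓ - 2) * (((n - 2).choose t : ℕ) : ℤ) ≤
      (i0 : ℤ) * ((((i0 : ℤ) + ℓ).toNat.choose t : ℕ) : ℤ) +
        ((i0 : ℤ) + ℓ) * (((n - 1).choose t : ℕ) : ℤ) +
        ((n : ℤ) - 2 * (i0 : ℤ) - ℓ) * (((n - i0 - 1).choose t : ℕ) : ℤ) ∧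
    (0 ≤ ℓ → ℓ ≤ (n : ℤ) - 5 →
      (((ℓ + 1).toNat.choose t : ℕ) : ℤ) + (ℓ + 1) * (((n - 1).choose t : ℕ) : ℤ) +
          ((n : ℤ) - ℓ - 2) * (((n - 2).choose t : ℕ) : ℤ) <
        (i0 : ℤ) * ((((i0 : ℤ) + ℓ).toNat.choose t : ℕ) : ℤ) +
          ((i0 : ℤ) + ℓ) * (((n - 1).choose t : ℕ) : ℤ) +
          ((n : ℤ) - 2 * (i0 : ℤ) - ℓ) * (((n - i0 - 1).choose t : ℕ) : ℤ)) := by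
  rw [Nat.choose_eq_zero_of_lt (by omega : (ℓ + 1).toNat < t),
    Nat.choose_eq_zero_of_lt (by omega : ((i0 : ℤ) + ℓ).toNat < t),
    Nat.choose_eq_zero_of_lt (by omega : n - i0 - 1 < t), show n - 2 = n - 1 - 1 by omega]
  obtain ⟨a, ha⟩ : ∃ a : ℕ, (a : ℤ) = n - ℓ - 2 := ⟨(n - ℓ - 2).toNat, by omega⟩
  have hcodeg : n - 1 - t ≤ i0 - 1 := by omega
  have hweak := Nat.mul_choose_pred_le_mul_choose (by omega : a ≤ n - 1) hcodeg
  zify [(by omega : 1 ≤ i0)] at hweak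
  rw [ha] at hweak
  refine ⟨by push_cast; linarith, fun hl hl' => ?_⟩
  have hstrict := Nat.mul_choose_pred_lt_mul_choose (by omega : a < n - 1) hcodeg (by omega) ht2
  zify [(by omega : 1 ≤ i0)] at hstrict
  rw [ha] at hstrict
  push_cast
  linarith
end

section
/- Let n ≥ 6 be an integer. Then the number of 2-stars satisfies s_2(G₁) > s_2(G_{i_0}), where s_2(G₁) = (n-2)(n²-4n+5)/2, and s_2(G_{i_0}) = (n-1)(5n²-14n+5)/16 if n is odd, and s_2(G_{i_0}) = (n-2)(5n²-14n+16)/16 if n is even. -/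
/-! Both inequalities reduce to the factorizations
`8 (n-2)(n²-4n+5) - (n-1)(5n²-14n+5) = (n-3)(n-5)(3n-5)` and
`8 (n-2)(n²-4n+5) - (n-2)(5n²-14n+16) = 3 (n-2)²(n-4)`,
whose right-hand sides are positive for `n > 5`. -/

section

variable {K : Type*} [Field K] [LinearOrder K] [IsStrictOrderedRing K]

lemma two_star_gap_odd (x : K) :
    (x - 2) * (x ^ 2 - 4 * x + 5) / 2 - (x - 1) * (5 * x ^ 2 - 14 * x + 5) / 16 =
      (x - 3) * (x - 5) * (3 * x - 5) / 16 := by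
  ring

lemma two_star_gap_even (x : K) :
    (x - 2) * (x ^ 2 - 4 * x + 5) / 2 - (x - 2) * (5 * x ^ 2 - 14 * x + 16) / 16 =
      3 * (x - 2) ^ 2 * (x - 4) / 16 := by
  ring

lemma two_star_lt_odd {x : K} (hx : 5 < x) :
    (x - 1) * (5 * x ^ 2 - 14 * x + 5) / 16 < (x - 2) * (x ^ 2 - 4 * x + 5) / 2 := by
  have hgap : 0 < (x - 3) * (x - 5) * (3 * x - 5) / 16 := by
    have : 0 < x - 3 := by linarith
    have : 0 < x - 5 := by linarith
    have : 0 < 3 * x - 5 := by linarith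
    positivity
  linarith [two_star_gap_odd x]

lemma two_star_lt_even {x : K} (hx : 4 < x) :
    (x - 2) * (5 * x ^ 2 - 14 * x + 16) / 16 < (x - 2) * (x ^ 2 - 4 * x + 5) / 2 := by
  have hgap : 0 < 3 * (x - 2) ^ 2 * (x - 4) / 16 := by
    have : 0 < x - 2 := by linarith
    have : 0 < x - 4 := by linarith
    positivity
  linarith [two_star_gap_even x]

end

/-- For `n ≥ 6`: `s₂(G₁) = (n-2)(n²-4n+5)/2` strictly exceeds `s₂(G_{i₀})`, which
equals `(n-1)(5n²-14n+5)/16` if `n` is odd and `(n-2)(5n²-14n+16)/16` if `n` is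
even. -/
theorem stmt15 (n : ℕ) (hn : 6 ≤ n) :
    (Odd n → ((n : ℚ) - 2) * ((n : ℚ)^2 - 4 * n + 5) / 2 >
      ((n : ℚ) - 1) * (5 * (n : ℚ)^2 - 14 * n + 5) / 16) ∧
    (Even n → ((n : ℚ) - 2) * ((n : ℚ)^2 - 4 * n + 5) / 2 >
      ((n : ℚ) - 2) * (5 * (n : ℚ)^2 - 14 * n + 16) / 16) := by
  have hn' : (6 : ℚ) ≤ n := by exact_mod_cast hn
  exact ⟨fun _ => two_star_lt_odd (by linarith), fun _ => two_star_lt_even (by linarith)⟩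
end

section
/- Define f(n,t) = s_t(G₁(n)) − s_t(G_{i_0}(n)) where, for ℓ = 0, s_t(G₁(n)) = (n-2)·C(n-2,t) + C(n-1,t), and s_t(G_{i_0}(n)) = ((n+1)/2)·C((n-1)/2, t) + ((n-1)/2)·C(n-1, t) when n is odd, and s_t(G_{i_0}(n)) = (n/2-1)·C(n/2-1, t) + (n/2-1)·C(n-1, t) + 2·C(n/2, t) when n is even. Then for all integers t ≥ 3 and n ≥ 2t, f(n+1, t) − f(n, t) > 0. -/
/-!
Pascal's rule turns `f(n+1,t) - f(n,t)` into a short combination of binomial coefficients.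
For `n = 2j+2` it is `j · (C(2j,t-1) - C(2j,t-2) - C(j,t-1))`, which is positive because
`(2j-t+2) · (C(2j,t-1) - C(2j,t-2)) = (2j-2t+3) · C(2j,t-1)` and `C(2j,t-1) ≥ 2^(t-1) · C(j,t-1)`.
For `n = 2j+3` it is a sum of differences that are nonnegative by unimodality of `C(2j+1, ·)` and
monotonicity of `C(·, r)`, one of them strictly positive.
-/

/-- `fGap n t = s_t(G₁(n)) - s_t(G_{i₀}(n))` for `ℓ = 0`, where
`s_t(G₁(n)) = (n-2)·C(n-2,t) + C(n-1,t)` and `s_t(G_{i₀}(n))` equals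
`((n+1)/2)·C((n-1)/2,t) + ((n-1)/2)·C(n-1,t)` for odd `n` and
`(n/2-1)·C(n/2-1,t) + (n/2-1)·C(n-1,t) + 2·C(n/2,t)` for even `n`. -/
def fGap (n t : ℕ) : ℤ :=
  (((n - 2) * Nat.choose (n - 2) t + Nat.choose (n - 1) t : ℕ) : ℤ) -
    (if Even n then
      ((n / 2 - 1) * Nat.choose (n / 2 - 1) t + (n / 2 - 1) * Nat.choose (n - 1) t +
        2 * Nat.choose (n / 2) t : ℕ)
    else
      ((n + 1) / 2 * Nat.choose ((n - 1) / 2) t +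
        (n - 1) / 2 * Nat.choose (n - 1) t : ℕ))

namespace Nat

theorem two_pow_mul_choose_le_choose_two_mul (n k : ℕ) :
    2 ^ k * n.choose k ≤ (2 * n).choose k := by
  induction k with
  | zero => simp
  | succ k ih =>
    refine Nat.le_of_mul_le_mul_right ?_ k.succ_pos
    calc 2 ^ (k + 1) * n.choose (k + 1) * (k + 1)
        = 2 ^ k * n.choose k * (2 * (n - k)) := by rw [mul_assoc, choose_succ_right_eq]; ring
      _ ≤ (2 * n).choose k * (2 * n - k) := Nat.mul_le_mul ih (by omega)
      _ = (2 * n).choose (k + 1) * (k + 1) := (choose_succ_right_eq _ _).symm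

theorem choose_succ_lt_choose_succ {a b k : ℕ} (hk : k ≤ a) (hab : a < b) :
    a.choose (k + 1) < b.choose (k + 1) :=
  calc a.choose (k + 1) < a.choose k + a.choose (k + 1) := Nat.lt_add_of_pos_left (choose_pos hk)
    _ = (a + 1).choose (k + 1) := (choose_succ_succ' a k).symm
    _ ≤ b.choose (k + 1) := choose_le_choose _ hab

theorem choose_succ_add_choose_lt_choose_two_mul {j k : ℕ} (hk : 1 ≤ k) (hkj : k < j) :
    j.choose (k + 1) + (2 * j).choose k < (2 * j).choose (k + 1) := by
  obtain ⟨d, rfl⟩ : ∃ d, j = k + 1 + d := ⟨j - (k + 1), by omega⟩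
  have hratio : (2 * (k + 1 + d)).choose (k + 1) * (k + 1)
      = (2 * (k + 1 + d)).choose k * (k + 2 + 2 * d) := by
    rw [choose_succ_right_eq]; congr 1; omega
  have hpow : k + 3 ≤ 2 ^ (k + 1) := by
    have := Nat.lt_two_pow_self (n := k)
    rw [pow_succ]; omega
  have hdouble : (k + 3) * (k + 1 + d).choose (k + 1) ≤ (2 * (k + 1 + d)).choose (k + 1) :=
    (Nat.mul_le_mul_right _ hpow).trans (two_pow_mul_choose_le_choose_two_mul _ _)
  have hpos : 0 < (k + 1 + d).choose (k + 1) := choose_pos (by omega)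
  nlinarith

end Nat

open Nat

theorem fGap_two_mul_add_two (j t : ℕ) :
    fGap (2 * j + 2) t = 2 * j * (2 * j).choose t + (2 * j + 1).choose t
      - (j * j.choose t + j * (2 * j + 1).choose t + 2 * (j + 1).choose t) := by
  have : Even (2 * j + 2) := ⟨j + 1, by ring⟩
  rw [fGap, if_pos this, show (2 * j + 2) / 2 = j + 1 by omega]
  push_cast [Nat.add_sub_cancel]
  ring

theorem fGap_two_mul_add_three (j t : ℕ) :
    fGap (2 * j + 3) t = (2 * j + 1) * (2 * j + 1).choose t + (2 * j + 2).choose t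
      - ((j + 2) * (j + 1).choose t + (j + 1) * (2 * j + 2).choose t) := by
  have : ¬ Even (2 * j + 3) := by rw [Nat.not_even_iff_odd]; exact ⟨j + 1, by ring⟩
  rw [fGap, if_neg this, show (2 * j + 3 + 1) / 2 = j + 2 by omega,
    show (2 * j + 3 - 1) / 2 = j + 1 by omega]
  push_cast [Nat.add_sub_cancel]
  ring

theorem fGap_even_step (j k : ℕ) : fGap (2 * j + 3) (k + 2) - fGap (2 * j + 2) (k + 2) =
    j * (((2 * j).choose (k + 1) : ℤ) - (2 * j).choose k - j.choose (k + 1)) := by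
  simp only [fGap_two_mul_add_two, fGap_two_mul_add_three, choose_succ_succ']
  push_cast
  ring

theorem fGap_odd_step (j k : ℕ) : fGap (2 * j + 4) (k + 2) - fGap (2 * j + 3) (k + 2) =
    j * (((2 * j + 1).choose (k + 1) : ℤ) - (2 * j + 1).choose k)
      + 2 * (((2 * j + 1).choose (k + 1) : ℤ) - (j + 1).choose (k + 1))
      + (((2 * j + 1).choose (k + 2) : ℤ) - (j + 1).choose (k + 2)) := by
  rw [show 2 * j + 4 = 2 * (j + 1) + 2 by ring, fGap_two_mul_add_two, fGap_two_mul_add_three,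
    show 2 * (j + 1) = 2 * j + 2 by ring]
  simp only [choose_succ_succ' (2 * j + 2), choose_succ_succ' (2 * j + 1),
    choose_succ_succ' (j + 1)]
  push_cast
  ring

theorem fGap_even_step_pos {j k : ℕ} (hk : 1 ≤ k) (hkj : k < j) :
    0 < fGap (2 * j + 3) (k + 2) - fGap (2 * j + 2) (k + 2) := by
  rw [fGap_even_step]
  have h : (j.choose (k + 1) : ℤ) + (2 * j).choose k < (2 * j).choose (k + 1) :=
    mod_cast choose_succ_add_choose_lt_choose_two_mul hk hkj
  exact mul_pos (mod_cast (by omega : 0 < j)) (by linarith)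

theorem fGap_odd_step_pos {j k : ℕ} (hkj : k < j) :
    0 < fGap (2 * j + 4) (k + 2) - fGap (2 * j + 3) (k + 2) := by
  rw [fGap_odd_step]
  have hmid : ((2 * j + 1).choose k : ℤ) ≤ (2 * j + 1).choose (k + 1) :=
    mod_cast choose_le_succ_of_lt_half_left (by omega)
  have hlt : ((j + 1).choose (k + 1) : ℤ) < (2 * j + 1).choose (k + 1) :=
    mod_cast choose_succ_lt_choose_succ (by omega) (by omega)
  have hle : ((j + 1).choose (k + 2) : ℤ) ≤ (2 * j + 1).choose (k + 2) :=
    mod_cast choose_le_choose _ (by omega)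
  have := mul_nonneg j.cast_nonneg (sub_nonneg.mpr hmid)
  linarith

/-- Inductive step: for all integers `t ≥ 3` and `n ≥ 2t`, `f(n+1,t) - f(n,t) > 0`. -/
theorem stmt17 (n t : ℕ) (ht : 3 ≤ t) (hn : 2 * t ≤ n) :
    0 < fGap (n + 1) t - fGap n t := by
  obtain ⟨k, rfl⟩ : ∃ k, t = k + 2 := ⟨t - 2, by omega⟩
  obtain ⟨j, rfl | rfl⟩ : ∃ j, n = 2 * j + 2 ∨ n = 2 * j + 3 := ⟨n / 2 - 1, by omega⟩
  · exact fGap_even_step_pos (by omega) (by omega)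
  · exact fGap_odd_step_pos (by omega)
end

section
/- Let n ≥ 4 and 1 ≤ t ≤ n/2 be integers. Then s_t(G₁) ≥ s_t(G_{i_0}), where G₁ = K_1 + (I_1 ∪ K_{n-2}) and G_{i_0} = K_{i_0} + (I_{i_0} ∪ K_{n-2i_0}) with i_0 = ⌊(n-1)/2⌋, both on n vertices. Moreover, the inequality is strict for n ≥ 6. -/
instance (n a b : ℕ) : DecidableRel (stdG n a b).Adj := fun v w =>
  inferInstanceAs (Decidable (_ ∧ _))

/-- `st t G` is the number of `t`-stars of `G`: the number of edges when `t = 1`,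
and `∑_v C(d(v), t)` when `t ≥ 2`. -/
def st {n : ℕ} (t : ℕ) (G : SimpleGraph (Fin n)) [DecidableRel G.Adj] : ℕ :=
  if t = 1 then G.edgeFinset.card else ∑ v : Fin n, (G.degree v).choose t

/-!
A vertex of `K_a + (I_b ∪ K_{n-a-b})` has degree `n - 1`, `a` or `n - b - 1`, so for
`n = 2i + 1` or `n = 2i + 2` both star counts are explicit sums of binomial coefficients.
For `t ≥ 2` the comparison reduces, via the absorption identity
`C(N, t) (N + 1) = C(N + 1, t) (N + 1 - t)`, to lower bounds on ratios `C(N, t) / C(m, t)` such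
as `C(2m, t) ≥ 2^t C(m, t)`: the ratio is a product of factors `(N - j) / (m - j)`, each at least
`2` once `j` is past a small threshold. What remains is a polynomial inequality in `i` and `t`,
which holds after bounding `2^(t-2) ≥ t - 1`. The case `t = 1` is a quadratic inequality in `i`,
and the few cases with `n ≤ 6` are computed.
-/

open Finset

theorem mul_choose_succ_le_of_mul_choose_le {c k m N j : ℕ} (h : c * m.choose j ≤ N.choose j)
    (hj : k * (m - j) ≤ N - j) : c * k * m.choose (j + 1) ≤ N.choose (j + 1) := by
  refine Nat.le_of_mul_le_mul_right ?_ j.succ_pos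
  rw [Nat.choose_succ_right_eq, mul_assoc, Nat.choose_succ_right_eq]
  calc c * k * (m.choose j * (m - j)) = c * m.choose j * (k * (m - j)) := by ring
    _ ≤ N.choose j * (N - j) := Nat.mul_le_mul h hj

theorem mul_choose_succ_lt_of_mul_choose_lt {c k m N j : ℕ} (h : c * m.choose j < N.choose j)
    (hj : k * (m - j) ≤ N - j) (hjN : j < N) : c * k * m.choose (j + 1) < N.choose (j + 1) := by
  refine Nat.lt_of_mul_lt_mul_right (a := j + 1) ?_
  rw [Nat.choose_succ_right_eq, mul_assoc, Nat.choose_succ_right_eq]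
  calc c * k * (m.choose j * (m - j)) = c * m.choose j * (k * (m - j)) := by ring
    _ ≤ c * m.choose j * (N - j) := Nat.mul_le_mul_left _ hj
    _ < N.choose j * (N - j) := Nat.mul_lt_mul_of_pos_right h (by omega)

theorem mul_pow_mul_choose_add_le {c k m N s : ℕ} (h : c * m.choose s ≤ N.choose s)
    (hk : ∀ j, s ≤ j → k * (m - j) ≤ N - j) (d : ℕ) :
    c * k ^ d * m.choose (s + d) ≤ N.choose (s + d) := by
  induction d with
  | zero => simpa using h
  | succ d ih =>
    rw [pow_succ, ← mul_assoc, ← add_assoc]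
    exact mul_choose_succ_le_of_mul_choose_le ih (hk _ (by omega))

theorem mul_pow_mul_choose_add_lt {c k m N s : ℕ} (h : c * m.choose s < N.choose s)
    (hk : ∀ j, s ≤ j → k * (m - j) ≤ N - j) {d : ℕ} (hd : s + d ≤ N) :
    c * k ^ d * m.choose (s + d) < N.choose (s + d) := by
  induction d with
  | zero => simpa using h
  | succ d ih =>
    rw [pow_succ, ← mul_assoc, ← add_assoc]
    exact mul_choose_succ_lt_of_mul_choose_lt (ih (by omega)) (hk _ (by omega)) (by omega)

theorem two_pow_mul_choose_le_choose_two_mul (m t : ℕ) :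
    2 ^ t * m.choose t ≤ (2 * m).choose t := by
  simpa using mul_pow_mul_choose_add_le (c := 1) (s := 0) (by simp) (fun j _ => by omega) t

theorem two_pow_mul_choose_succ_lt_choose_two_mul_sub_one {m t : ℕ} (hm : 2 ≤ m)
    (ht : t + 1 ≤ m) : 2 ^ t * m.choose (t + 1) < (2 * m - 1).choose (t + 1) := by
  simpa [add_comm 1 t] using mul_pow_mul_choose_add_lt (c := 1) (s := 1) (k := 2) (m := m)
    (N := 2 * m - 1) (by simp; omega) (fun j _ => by omega) (d := t) (by omega)

theorem two_pow_mul_choose_add_two_lt_choose_two_mul {m t : ℕ} (hm : 2 ≤ m)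
    (ht : t + 2 ≤ m + 1) : 2 ^ t * (m + 1).choose (t + 2) < (2 * m).choose (t + 2) := by
  have base : (m + 1).choose 2 < (2 * m).choose 2 := by
    refine Nat.lt_of_mul_lt_mul_right (a := 2) ?_
    rw [Nat.choose_succ_right_eq, Nat.choose_succ_right_eq, Nat.choose_one_right,
      Nat.choose_one_right, Nat.add_sub_cancel]
    nlinarith [Nat.sub_add_cancel (show 1 ≤ 2 * m by omega)]
  simpa [add_comm 2 t] using mul_pow_mul_choose_add_lt (c := 1) (s := 2) (k := 2) (m := m + 1)
    (N := 2 * m) (by simpa using base) (fun j _ => by omega) (d := t) (by omega)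

theorem odd_choose_inequality {i t : ℕ} (hi : 3 ≤ i) (ht : 2 ≤ t) (hti : t ≤ i) :
    i * (2 * i).choose t + (i + 1) * i.choose t
      < (2 * i - 1) * (2 * i - 1).choose t + (2 * i).choose t := by
  obtain ⟨v, rfl⟩ : ∃ v, t = v + 2 := ⟨t - 2, by omega⟩
  obtain ⟨u, rfl⟩ : ∃ u, i = v + u + 2 := ⟨i - v - 2, by omega⟩
  have hB := two_pow_mul_choose_succ_lt_choose_two_mul_sub_one (m := v + u + 2) (t := v + 1)
    (by omega) (by omega)
  rw [show 2 * (v + u + 2) - 1 = 2 * v + 2 * u + 3 by omega] at hB ⊢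
  rw [show 2 * (v + u + 2) = 2 * v + 2 * u + 3 + 1 by ring]
  set A := (2 * v + 2 * u + 3).choose (v + 2)
  set B := (v + u + 2).choose (v + 2)
  set D := (2 * v + 2 * u + 3 + 1).choose (v + 2)
  have habs : A * (2 * v + 2 * u + 3 + 1) = D * (v + 2 * u + 2) := by
    rw [Nat.choose_mul_succ_eq, show 2 * v + 2 * u + 3 + 1 - (v + 2) = v + 2 * u + 2 by omega]
  have hpoly :
      (v + u + 3) * (v + 2 * u + 2) ≤ (2 * (v + u + 2) * u + (v + 2)) * (2 * 2 ^ v) := by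
    refine le_trans ?_ (Nat.mul_le_mul_left _ (Nat.mul_le_mul_left 2 Nat.lt_two_pow_self))
    rcases u with _ | w
    · nlinarith
    · nlinarith [Nat.zero_le (v * w), Nat.zero_le (v * v * w), Nat.zero_le (v * w * w)]
  have h₁ := Nat.mul_le_mul_right B hpoly
  have h₂ := Nat.mul_lt_mul_of_pos_left hB (k := 2 * (v + u + 2) * u + (v + 2)) (by positivity)
  rw [pow_succ] at h₂
  -- multiply by `2i - t`, so that absorption (`habs`) turns `C(2i, t)` into `C(2i - 1, t)`
  refine Nat.lt_of_mul_lt_mul_left (a := v + 2 * u + 2) ?_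
  linarith [congrArg ((v + u + 1) * ·) habs]

theorem even_choose_inequality {i t : ℕ} (hi : 3 ≤ i) (ht : 2 ≤ t) (hti : t ≤ i + 1) :
    i * (2 * i + 1).choose t + i * i.choose t + 2 * (i + 1).choose t
      < 2 * i * (2 * i).choose t + (2 * i + 1).choose t := by
  obtain ⟨v, rfl⟩ : ∃ v, t = v + 2 := ⟨t - 2, by omega⟩
  obtain ⟨u, rfl⟩ : ∃ u, i = v + u + 1 := ⟨i - v - 1, by omega⟩
  have hB := two_pow_mul_choose_le_choose_two_mul (v + u + 1) (v + 2)
  have hB' := two_pow_mul_choose_add_two_lt_choose_two_mul (m := v + u + 1) (t := v)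
    (by omega) (by omega)
  set B := (v + u + 1).choose (v + 2)
  set B' := (v + u + 1 + 1).choose (v + 2)
  set D := (2 * (v + u + 1)).choose (v + 2)
  set E := (2 * (v + u + 1) + 1).choose (v + 2)
  have habs : D * (2 * (v + u + 1) + 1) = E * (v + 2 * u + 1) := by
    rw [Nat.choose_mul_succ_eq, show 2 * (v + u + 1) + 1 - (v + 2) = v + 2 * u + 1 by omega]
  have hpoly : (v + 2 * u + 1) * (v + u + 9)
      ≤ (2 * (v + u + 1) * u + (v + u + 2)) * (4 * 2 ^ v) := by
    refine le_trans ?_ (Nat.mul_le_mul_left _ (Nat.mul_le_mul_left 4 Nat.lt_two_pow_self))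
    rcases u with _ | w
    · nlinarith
    · nlinarith [Nat.zero_le (v * w), Nat.zero_le (v * v * w), Nat.zero_le (v * w * w)]
  have hsmall : (v + 2 * u + 1) * ((v + u + 1) * B + 2 * B')
      < (2 * (v + u + 1) * u + (v + u + 2)) * D := by
    have h₁ := Nat.mul_le_mul_left ((v + 2 * u + 1) * (v + u + 1)) hB
    have h₂ := Nat.mul_lt_mul_of_pos_left hB' (k := (v + 2 * u + 1) * 8) (by positivity)
    have h₃ := Nat.mul_le_mul_right D hpoly
    rw [pow_add] at h₁
    refine Nat.lt_of_mul_lt_mul_left (a := 2 ^ v) ?_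
    linarith
  -- multiply by `2i + 1 - t`, so that absorption (`habs`) turns `C(2i + 1, t)` into `C(2i, t)`
  refine Nat.lt_of_mul_lt_mul_left (a := v + 2 * u + 1) ?_
  linarith [congrArg ((v + u + 1) * ·) habs]

theorem Fin.card_filter_univ_val (n : ℕ) (p : ℕ → Prop) [DecidablePred p] :
    #{w : Fin n | p w} = #{k ∈ range n | p k} := by
  simp only [← card_map Fin.valEmbedding, map_filter', Fin.map_valEmbedding_univ,
    Nat.Iio_eq_range]
  refine congrArg card (filter_congr fun k hk => ?_)
  simp [Fin.exists_iff, mem_range.mp hk]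

theorem degree_stdG {n a b : ℕ} (v : Fin n) :
    (stdG n a b).degree v =
      if (v : ℕ) < a then n - 1 else if (v : ℕ) < a + b then a else n - b - 1 := by
  have hv := v.isLt
  let p : ℕ → Prop := fun k =>
    k ≠ v ∧ ((v : ℕ) < a ∨ k < a ∨ (a + b ≤ (v : ℕ) ∧ a + b ≤ k))
  have hp : #{w | (stdG n a b).Adj v w} = #{k ∈ range n | p k} := by
    rw [← Fin.card_filter_univ_val]
    refine congrArg card (filter_congr fun w _ => ?_)
    simp [p, stdG, Fin.ext_iff, eq_comm]
  rw [← SimpleGraph.card_neighborFinset_eq_degree, SimpleGraph.neighborFinset_eq_filter, hp]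
  split_ifs with hlow hmid
  · rw [show {k ∈ range n | p k} = (range n).erase v by
      ext; simp only [mem_filter, mem_range, mem_erase, p]; omega]
    rw [card_erase_of_mem (mem_range.mpr hv), card_range]
  · rw [show {k ∈ range n | p k} = range a by
      ext; simp only [mem_filter, mem_range, p]; omega]
    exact card_range a
  · rw [show {k ∈ range n | p k} = (range a ∪ Ico (a + b) n).erase v by
        ext; simp only [mem_filter, mem_range, mem_erase, mem_union, mem_Ico, p]; omega,
      card_erase_of_mem (mem_union_right _ (mem_Ico.mpr ⟨by omega, hv⟩)),
      card_union_of_disjoint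
        (disjoint_left.mpr fun k hk hk' => by simp only [mem_range, mem_Ico] at hk hk'; omega),
      card_range, Nat.card_Ico]
    omega

def centeredStarCount {n : ℕ} (t : ℕ) (G : SimpleGraph (Fin n)) [DecidableRel G.Adj] : ℕ :=
  ∑ v, (G.degree v).choose t

theorem centeredStarCount_one {n : ℕ} (G : SimpleGraph (Fin n)) [DecidableRel G.Adj] :
    centeredStarCount 1 G = 2 * #G.edgeFinset := by
  simp only [centeredStarCount, Nat.choose_one_right, G.sum_degrees_eq_twice_card_edges]

theorem st_le_st_of_centeredStarCount_le {n t : ℕ} {G H : SimpleGraph (Fin n)}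
    [DecidableRel G.Adj] [DecidableRel H.Adj]
    (h : centeredStarCount t G ≤ centeredStarCount t H) : st t G ≤ st t H := by
  unfold st
  split_ifs with ht
  · rw [ht, centeredStarCount_one, centeredStarCount_one] at h
    omega
  · exact h

theorem st_lt_st_of_centeredStarCount_lt {n t : ℕ} {G H : SimpleGraph (Fin n)}
    [DecidableRel G.Adj] [DecidableRel H.Adj]
    (h : centeredStarCount t G < centeredStarCount t H) : st t G < st t H := by
  unfold st
  split_ifs with ht
  · rw [ht, centeredStarCount_one, centeredStarCount_one] at h
    omega
  · exact h

theorem centeredStarCount_stdG {n a b : ℕ} (t : ℕ) (hab : a + b ≤ n) :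
    centeredStarCount t (stdG n a b) =
      a * (n - 1).choose t + b * a.choose t + (n - a - b) * (n - b - 1).choose t := by
  let f : ℕ → ℕ := fun k =>
    (if k < a then n - 1 else if k < a + b then a else n - b - 1).choose t
  have hf : centeredStarCount t (stdG n a b) = ∑ k ∈ range n, f k := by
    simp only [centeredStarCount, degree_stdG, f]
    exact Fin.sum_univ_eq_sum_range f n
  have hlow : ∀ k ∈ range a, f k = (n - 1).choose t := fun k hk => by
    simp only [f, if_pos (mem_range.mp hk)]
  have hmid : ∀ k ∈ Ico a (a + b), f k = a.choose t := fun k hk => by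
    rw [mem_Ico] at hk
    simp only [f, if_neg (not_lt.2 hk.1), if_pos hk.2]
  have hhigh : ∀ k ∈ Ico (a + b) n, f k = (n - b - 1).choose t := fun k hk => by
    rw [mem_Ico] at hk
    simp only [f, if_neg (by omega : ¬k < a), if_neg (not_lt.2 hk.1)]
  rw [hf, ← sum_range_add_sum_Ico f hab, ← sum_range_add_sum_Ico f (Nat.le_add_right a b),
    sum_congr rfl hlow, sum_congr rfl hmid, sum_congr rfl hhigh]
  simp only [sum_const, card_range, Nat.card_Ico, smul_eq_mul, Nat.add_sub_cancel_left,
    Nat.sub_sub]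

theorem centeredStarCount_stdG_lt_of_odd {i t : ℕ} (hi : 3 ≤ i) (ht : 1 ≤ t) (hti : t ≤ i) :
    centeredStarCount t (stdG (2 * i + 1) i i) < centeredStarCount t (stdG (2 * i + 1) 1 1) := by
  rw [centeredStarCount_stdG t (by omega), centeredStarCount_stdG t (by omega),
    show 2 * i + 1 - 1 = 2 * i by omega, show 2 * i + 1 - i - i = 1 by omega,
    show 2 * i + 1 - i - 1 = i by omega]
  rcases ht.eq_or_lt with rfl | ht
  · simp only [Nat.choose_one_right]
    obtain ⟨j, rfl⟩ : ∃ j, i = j + 3 := ⟨i - 3, by omega⟩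
    rw [show 2 * (j + 3) - 1 = 2 * j + 5 by omega]
    nlinarith
  · linarith [odd_choose_inequality hi ht hti]

theorem centeredStarCount_stdG_lt_of_even {i t : ℕ} (hi : 2 ≤ i) (ht : 1 ≤ t)
    (hti : t ≤ i + 1) :
    centeredStarCount t (stdG (2 * i + 2) i i) < centeredStarCount t (stdG (2 * i + 2) 1 1) := by
  rw [centeredStarCount_stdG t (by omega), centeredStarCount_stdG t (by omega),
    show 2 * i + 2 - 1 = 2 * i + 1 by omega, show 2 * i + 2 - i - i = 2 by omega,
    show 2 * i + 2 - i - 1 = i + 1 by omega, show 2 * i + 1 - 1 = 2 * i by omega]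
  rcases ht.eq_or_lt with rfl | ht
  · simp only [Nat.choose_one_right]
    nlinarith
  rcases hi.eq_or_lt with rfl | hi
  · interval_cases t <;> decide
  · linarith [even_choose_inequality hi ht hti]

theorem centeredStarCount_stdG_lt {n t : ℕ} (hn : 6 ≤ n) (ht1 : 1 ≤ t) (ht2 : t ≤ n / 2) :
    centeredStarCount t (stdG n ((n - 1) / 2) ((n - 1) / 2)) <
      centeredStarCount t (stdG n 1 1) := by
  obtain ⟨i, hi⟩ : ∃ i, (n - 1) / 2 = i := ⟨_, rfl⟩
  rw [hi]
  rcases (by omega : n = 2 * i + 1 ∨ n = 2 * i + 2) with rfl | rfl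
  · exact centeredStarCount_stdG_lt_of_odd (by omega) ht1 (by omega)
  · exact centeredStarCount_stdG_lt_of_even (by omega) ht1 (by omega)

theorem centeredStarCount_stdG_le {n t : ℕ} (hn : 4 ≤ n) (ht1 : 1 ≤ t) (ht2 : t ≤ n / 2) :
    centeredStarCount t (stdG n ((n - 1) / 2) ((n - 1) / 2)) ≤
      centeredStarCount t (stdG n 1 1) := by
  rcases (by omega : n = 4 ∨ n = 5 ∨ 6 ≤ n) with rfl | rfl | hn
  · rfl
  · rw [centeredStarCount_stdG t (by omega), centeredStarCount_stdG t (by omega)]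
    interval_cases t <;> decide
  · exact (centeredStarCount_stdG_lt hn ht1 ht2).le

/-- For `n ≥ 4` and `1 ≤ t ≤ n/2`, `s_t(G₁) ≥ s_t(G_{i₀})` where
`G₁ = K_1 + (I_1 ∪ K_{n-2})` and `G_{i₀} = K_{i₀} + (I_{i₀} ∪ K_{n-2i₀})` with
`i₀ = ⌊(n-1)/2⌋`; moreover the inequality is strict for `n ≥ 6`. -/
theorem stmt18 (n t : ℕ) (hn : 4 ≤ n) (ht1 : 1 ≤ t) (ht2 : t ≤ n / 2) :
    st t (stdG n ((n - 1) / 2) ((n - 1) / 2)) ≤ st t (stdG n 1 1) ∧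
      (6 ≤ n → st t (stdG n ((n - 1) / 2) ((n - 1) / 2)) < st t (stdG n 1 1)) :=
  ⟨st_le_st_of_centeredStarCount_le (centeredStarCount_stdG_le hn ht1 ht2),
    fun h6 => st_lt_st_of_centeredStarCount_lt (centeredStarCount_stdG_lt h6 ht1 ht2)⟩
end

section
/- Let n be an even integer, t an integer with 3 ≤ t ≤ n/2, and n ≥ 2t. Then C(n-1, t)·((n/2 - t + 1)/(n - t) − 1/(n-1)) ≥ C(n/2, t); equivalently, (C(n-1,t)/C(n/2,t))·((n/2-t+1)/(n-t) − 1/(n-1)) ≥ 1. -/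
/-!
With `n = 2m`, the ratio `C(2m-1, t) / C(m, t)` is the ratio of falling factorials
`(2m-1)_t / m_t`. Splitting off the outer factors `2m-1, 2m-t` and `m, m-t+1`, each of the
remaining `t - 2` factors `2m-2-i` of the numerator is at least twice the factor `m-1-i` of the
denominator, so `C(2m-1, t) / C(m, t) ≥ 2^(t-2) (2m-1)(2m-t) / (m (m-t+1))`. Since `t ≥ 3` this
power is at least `2`, and clearing denominators leaves the quadratic inequality
`m (m-t+1) ≤ 2 ((m-t+1)(2m-1) - (2m-t))`.
-/

theorem Nat.two_pow_mul_descFactorial_le (a k : ℕ) :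
    2 ^ k * a.descFactorial k ≤ (2 * a).descFactorial k := by
  induction k with
  | zero => simp
  | succ k ih =>
    rw [Nat.descFactorial_succ, Nat.descFactorial_succ, pow_succ]
    calc 2 ^ k * 2 * ((a - k) * a.descFactorial k)
        = (2 * (a - k)) * (2 ^ k * a.descFactorial k) := by ring
      _ ≤ (2 * a - k) * (2 * a).descFactorial k := Nat.mul_le_mul (by omega) ih

theorem Nat.two_pow_mul_descFactorial_le_descFactorial_two_mul_sub_one {m t : ℕ} (ht : 2 ≤ t)
    (htm : t ≤ m) :
    2 ^ (t - 2) * (2 * m - 1) * (2 * m - t) * m.descFactorial t ≤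
      m * (m - t + 1) * (2 * m - 1).descFactorial t := by
  obtain ⟨s, rfl⟩ : ∃ s, t = s + 2 := ⟨t - 2, by omega⟩
  obtain ⟨p, rfl⟩ : ∃ p, m = p + 1 := ⟨m - 1, by omega⟩
  rw [show 2 * (p + 1) - 1 = 2 * p + 1 by omega, show 2 * (p + 1) - (s + 2) = 2 * p - s by omega,
    show p + 1 - (s + 2) + 1 = p - s by omega, Nat.add_sub_cancel, Nat.succ_descFactorial_succ,
    Nat.descFactorial_succ, Nat.succ_descFactorial_succ, Nat.descFactorial_succ]
  calc 2 ^ s * (2 * p + 1) * (2 * p - s) * ((p + 1) * ((p - s) * p.descFactorial s))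
      = (p + 1) * (p - s) * ((2 * p + 1) * (2 * p - s)) * (2 ^ s * p.descFactorial s) := by ring
    _ ≤ (p + 1) * (p - s) * ((2 * p + 1) * (2 * p - s)) * (2 * p).descFactorial s :=
      Nat.mul_le_mul_left _ (Nat.two_pow_mul_descFactorial_le p s)
    _ = (p + 1) * (p - s) * ((2 * p + 1) * ((2 * p - s) * (2 * p).descFactorial s)) := by ring

theorem Nat.two_pow_mul_choose_le_choose_two_mul_sub_one {m t : ℕ} (ht : 2 ≤ t) (htm : t ≤ m) :
    2 ^ (t - 2) * (2 * m - 1) * (2 * m - t) * m.choose t ≤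
      m * (m - t + 1) * (2 * m - 1).choose t := by
  have h := Nat.two_pow_mul_descFactorial_le_descFactorial_two_mul_sub_one ht htm
  rw [Nat.descFactorial_eq_factorial_mul_choose, Nat.descFactorial_eq_factorial_mul_choose] at h
  refine Nat.le_of_mul_le_mul_left ?_ t.factorial_pos
  linarith

theorem Nat.choose_le_choose_two_mul_sub_one_mul {m t : ℕ} (ht : 3 ≤ t) (htm : t ≤ m) :
    (m.choose t : ℝ) ≤
      (2 * m - 1).choose t * ((m - t + 1) / (2 * m - t) - 1 / (2 * m - 1)) := by
  have ht' : (3 : ℝ) ≤ t := by exact_mod_cast ht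
  have htm' : (t : ℝ) ≤ m := by exact_mod_cast htm
  have hratio : (2 : ℝ) ^ (t - 2) * (2 * m - 1) * (2 * m - t) * m.choose t ≤
      m * (m - t + 1) * (2 * m - 1).choose t := by
    have h := (Nat.cast_le (α := ℝ)).2 (Nat.two_pow_mul_choose_le_choose_two_mul_sub_one
      (by omega : 2 ≤ t) htm)
    push_cast [Nat.cast_sub htm, Nat.cast_sub (by omega : t ≤ 2 * m),
      Nat.cast_sub (by omega : 1 ≤ 2 * m)] at h
    exact h
  have hpow : (2 : ℝ) ≤ 2 ^ (t - 2) := le_self_pow₀ (by norm_num) (by omega)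
  have hquad : (m : ℝ) * (m - t + 1) ≤ 2 * ((m - t + 1) * (2 * m - 1) - (2 * m - t)) := by
    nlinarith
  have hc : (0 : ℝ) ≤ m.choose t := Nat.cast_nonneg _
  have hlhs : (0 : ℝ) ≤ (2 * m - 1) * (2 * m - t) * m.choose t :=
    mul_nonneg (mul_nonneg (by linarith) (by linarith)) hc
  rw [div_sub_div _ _ (by linarith) (by linarith), mul_div_assoc', le_div_iff₀ (by nlinarith)]
  nlinarith [mul_le_mul_of_nonneg_right hpow hlhs]

/-- Key binomial inequality in the even case of the inductive step: for even `n` and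
`3 ≤ t ≤ n/2`, `C(n-1,t)·((n/2-t+1)/(n-t) - 1/(n-1)) ≥ C(n/2,t)` as real numbers;
equivalently `(C(n-1,t)/C(n/2,t))·((n/2-t+1)/(n-t) - 1/(n-1)) ≥ 1`. -/
theorem stmt19 (n t : ℕ) (hn : Even n) (ht : 3 ≤ t) (htn : 2 * t ≤ n) :
    ((Nat.choose (n - 1) t : ℝ) *
        (((n : ℝ) / 2 - (t : ℝ) + 1) / ((n : ℝ) - (t : ℝ)) - 1 / ((n : ℝ) - 1)) ≥
      (Nat.choose (n / 2) t : ℝ)) ∧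
    ((Nat.choose (n - 1) t : ℝ) / (Nat.choose (n / 2) t : ℝ) *
        (((n : ℝ) / 2 - (t : ℝ) + 1) / ((n : ℝ) - (t : ℝ)) - 1 / ((n : ℝ) - 1)) ≥ 1) := by
  obtain ⟨m, rfl⟩ := hn
  have htm : t ≤ m := by omega
  have key := Nat.choose_le_choose_two_mul_sub_one_mul ht htm
  rw [show (m + m) / 2 = m by omega, show m + m - 1 = 2 * m - 1 by omega, Nat.cast_add, ← two_mul,
    mul_div_cancel_left₀ _ two_ne_zero]
  have hc : (0 : ℝ) < m.choose t := by exact_mod_cast Nat.choose_pos htm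
  refine ⟨key, ?_⟩
  rwa [div_mul_eq_mul_div, ge_iff_le, one_le_div hc]
end
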